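/- arXiv:2605.25591 — 3 statements merged into one kernel-verified Lean document; each statement's English description precedes it below -/
import Mathlib

section
/- Let g be a continuous RV_ρ-function with ρ < 0 and T ∈ 𝓛_g, i.e., μ_j(T) = O(g(j)). Then the distance from T to the finite-rank operators in the quasi-norm ‖·‖_g equals limsup_{j→∞} g(j)^{-1} μ_j(T). In particular, T lies in the ‖·‖_g-closure of the finite-rank operators if and only if μ_j(T) = o(g(j)). -/
open Filter Topology ENNReal NNReal

/-- The `j`-th singular value (approximation number) of an operator `T` on a Hilbert space. -/
noncomputable def singVal {H : Type*} [NormedAddCommGroup H] [InnerProductSpace ℂ H]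
    (T : H →L[ℂ] H) (j : ℕ) : ℝ :=
  sInf {c : ℝ | ∃ R : H →L[ℂ] H,
    Module.rank ℂ (LinearMap.range (R : H →ₗ[ℂ] H)) ≤ (j : Cardinal) ∧ c = ‖T - R‖}

/-- The weak Lorentz quasi-norm `‖T‖_g = sup_j g(j)⁻¹ μ_j(T)`, valued in `ℝ≥0∞`. -/
noncomputable def wnorm {H : Type*} [NormedAddCommGroup H] [InnerProductSpace ℂ H]
    (g : ℝ → ℝ) (T : H →L[ℂ] H) : ℝ≥0∞ :=
  ⨆ j : ℕ, ENNReal.ofReal ((g j)⁻¹ * singVal T j)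

set_option linter.unusedSectionVars false
set_option linter.unusedVariables false

section aux
variable {H : Type*} [NormedAddCommGroup H] [InnerProductSpace ℂ H]

lemma rank_range_zero' (j : ℕ) :
    Module.rank ℂ (LinearMap.range ((0 : H →L[ℂ] H) : H →ₗ[ℂ] H)) ≤ (j : Cardinal) := by
  have : LinearMap.range ((0 : H →L[ℂ] H) : H →ₗ[ℂ] H) = ⊥ := by
    ext x; simp [LinearMap.mem_range, eq_comm]
  rw [this, rank_bot]; exact zero_le

lemma singVal_bddBelow (T : H →L[ℂ] H) (j : ℕ) :
    BddBelow {c : ℝ | ∃ R : H →L[ℂ] H,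
      Module.rank ℂ (LinearMap.range (R : H →ₗ[ℂ] H)) ≤ (j : Cardinal) ∧ c = ‖T - R‖} :=
  ⟨0, by rintro c ⟨R, -, rfl⟩; exact norm_nonneg _⟩

lemma singVal_set_nonempty (T : H →L[ℂ] H) (j : ℕ) :
    Set.Nonempty {c : ℝ | ∃ R : H →L[ℂ] H,
      Module.rank ℂ (LinearMap.range (R : H →ₗ[ℂ] H)) ≤ (j : Cardinal) ∧ c = ‖T - R‖} :=
  ⟨‖T - 0‖, 0, rank_range_zero' j, rfl⟩

lemma singVal_le (T : H →L[ℂ] H) {j : ℕ} {R : H →L[ℂ] H}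
    (hR : Module.rank ℂ (LinearMap.range (R : H →ₗ[ℂ] H)) ≤ (j : Cardinal)) :
    singVal T j ≤ ‖T - R‖ :=
  csInf_le (singVal_bddBelow T j) ⟨R, hR, rfl⟩

lemma singVal_nonneg (T : H →L[ℂ] H) (j : ℕ) : 0 ≤ singVal T j :=
  le_csInf (singVal_set_nonempty T j) (by rintro c ⟨R, -, rfl⟩; exact norm_nonneg _)

lemma singVal_le_norm (T : H →L[ℂ] H) (j : ℕ) : singVal T j ≤ ‖T‖ := by
  simpa using singVal_le T (rank_range_zero' j)

/-- Fan-type inequality. -/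
lemma fan (T R : H →L[ℂ] H) {J : ℕ} (hR : Module.rank ℂ (LinearMap.range (R : H →ₗ[ℂ] H)) ≤ (J : Cardinal))
    (k : ℕ) : singVal T (k + J) ≤ singVal (T - R) k := by
  apply le_csInf (singVal_set_nonempty (T - R) k)
  rintro c ⟨S, hS, rfl⟩
  have hle : LinearMap.range ((R + S : H →L[ℂ] H) : H →ₗ[ℂ] H) ≤ LinearMap.range (R : H →ₗ[ℂ] H) ⊔ LinearMap.range (S : H →ₗ[ℂ] H) := by
    rintro _ ⟨x, rfl⟩
    exact Submodule.add_mem_sup (LinearMap.mem_range_self (R : H →ₗ[ℂ] H) x) (LinearMap.mem_range_self (S : H →ₗ[ℂ] H) x)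
  have hrank : Module.rank ℂ (LinearMap.range ((R + S : H →L[ℂ] H) : H →ₗ[ℂ] H)) ≤ ((k + J : ℕ) : Cardinal) := by
    refine ((Submodule.rank_mono hle).trans
      (Submodule.rank_add_le_rank_add_rank _ _)).trans ?_
    rw [Nat.cast_add, add_comm]
    exact add_le_add hS hR
  have := singVal_le T hrank
  have heq : T - (R + S) = (T - R) - S := by abel
  rwa [heq] at this

variable [CompleteSpace H]

omit [CompleteSpace H] in
lemma proj_minimal (V : Submodule ℂ H) [FiniteDimensional ℂ V] (z v : H) (hv : v ∈ V) :
    ‖z - (V.subtypeL.comp (V.orthogonalProjectionOnto)) z‖ ≤ ‖z - v‖ := by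
  have h1 : ‖z - (V.orthogonalProjectionOnto z : H)‖ = ⨅ w : V, ‖z - w‖ :=
    Submodule.starProjection_minimal (U := V) z
  have hb : BddBelow (Set.range fun w : V => ‖z - (w : H)‖) :=
    ⟨0, by rintro _ ⟨w, rfl⟩; exact norm_nonneg _⟩
  have h2 : (⨅ w : V, ‖z - w‖) ≤ ‖z - v‖ := ciInf_le hb ⟨v, hv⟩
  simpa [ContinuousLinearMap.comp_apply] using h1.trans_le h2

lemma proj_contract (V : Submodule ℂ H) [FiniteDimensional ℂ V] (z : H) :
    ‖z - (V.subtypeL.comp (V.orthogonalProjectionOnto)) z‖ ≤ ‖z‖ := by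
  simpa using proj_minimal V z 0 (zero_mem V)

/-- Subtracting `P ∘ T` (with `P` an orthogonal projection) does not increase singular values. -/
lemma singVal_proj_le (T : H →L[ℂ] H) (V : Submodule ℂ H) [FiniteDimensional ℂ V] (k : ℕ) :
    singVal (T - (V.subtypeL.comp (V.orthogonalProjectionOnto)).comp T) k ≤ singVal T k := by
  set P : H →L[ℂ] H := V.subtypeL.comp (V.orthogonalProjectionOnto) with hP
  apply le_csInf (singVal_set_nonempty T k)
  rintro c ⟨R', hR', rfl⟩
  set S : H →L[ℂ] H := R' - P.comp R' with hS
  have hrank : Module.rank ℂ (LinearMap.range (S : H →ₗ[ℂ] H)) ≤ (k : Cardinal) := by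
    have hle : LinearMap.range (S : H →ₗ[ℂ] H) ≤
        Submodule.map (((1 : H →L[ℂ] H) - P : H →L[ℂ] H) : H →ₗ[ℂ] H) (LinearMap.range (R' : H →ₗ[ℂ] H)) := by
      rintro _ ⟨x, rfl⟩
      exact ⟨R' x, LinearMap.mem_range_self (R' : H →ₗ[ℂ] H) x, by simp [hS]⟩
    exact ((Submodule.rank_mono hle).trans (rank_map_le _ _)).trans hR'
  refine (singVal_le _ hrank).trans ?_
  refine ContinuousLinearMap.opNorm_le_bound _ (norm_nonneg _) (fun x => ?_)
  have h1 : ((T - P.comp T) - S) x = (T - R') x - P ((T - R') x) := by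
    simp only [ContinuousLinearMap.sub_apply, ContinuousLinearMap.comp_apply, hS, map_sub]
    abel
  rw [h1]
  exact (proj_contract V _).trans ((T - R').le_opNorm x)

/-- A compact operator is well-approximated by `P ∘ T` for finite-rank orthogonal
projections `P`. -/
lemma exists_proj_approx (T : H →L[ℂ] H) (hT : IsCompactOperator T) {δ : ℝ} (hδ : 0 < δ) :
    ∃ (V : Submodule ℂ H) (_ : FiniteDimensional ℂ V),
      ‖T - (V.subtypeL.comp (V.orthogonalProjectionOnto)).comp T‖ ≤ δ := by
  have hK : IsCompact (closure (T '' Metric.closedBall 0 1)) :=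
    hT.isCompact_closure_image_closedBall 1
  obtain ⟨t, htfin, htcov⟩ := (Metric.totallyBounded_iff.mp hK.totallyBounded) δ hδ
  refine ⟨Submodule.span ℂ t, FiniteDimensional.span_of_finite ℂ htfin, ?_⟩
  set V : Submodule ℂ H := Submodule.span ℂ t
  haveI : FiniteDimensional ℂ V := FiniteDimensional.span_of_finite ℂ htfin
  refine ContinuousLinearMap.opNorm_le_bound _ hδ.le (fun x => ?_)
  rcases eq_or_ne x 0 with rfl | hx
  · simp
  · set u : H := ‖x‖⁻¹ • x with hu
    have hux : x = (‖x‖ : ℝ) • u := by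
      rw [hu, smul_smul, mul_inv_cancel₀ (norm_ne_zero_iff.mpr hx), one_smul]
    have hunorm : ‖u‖ ≤ 1 := by
      rw [hu, norm_smul, norm_inv, norm_norm]
      rw [inv_mul_cancel₀ (norm_ne_zero_iff.mpr hx)]
    have hTu : T u ∈ closure (T '' Metric.closedBall 0 1) :=
      subset_closure ⟨u, by simpa [Metric.mem_closedBall] using hunorm, rfl⟩
    obtain ⟨y, hyt, hy⟩ : ∃ y ∈ t, T u ∈ Metric.ball y δ := by
      simpa using htcov hTu
    have hyV : y ∈ V := Submodule.subset_span hyt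
    have hb : ‖T u - (V.subtypeL.comp (V.orthogonalProjectionOnto)) (T u)‖ ≤ δ :=
      (proj_minimal V (T u) y hyV).trans (by
        rw [Metric.mem_ball, dist_eq_norm] at hy; exact hy.le)
    have happ : (T - (V.subtypeL.comp (V.orthogonalProjectionOnto)).comp T) x
        = (‖x‖ : ℝ) • ((T - (V.subtypeL.comp (V.orthogonalProjectionOnto)).comp T) u) := by
      conv_lhs => rw [hux]
      exact ContinuousLinearMap.map_smul_of_tower _ _ _
    rw [happ, norm_smul, norm_norm]
    have h2 : ‖(T - (V.subtypeL.comp (V.orthogonalProjectionOnto)).comp T) u‖ ≤ δ := by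
      simpa [ContinuousLinearMap.sub_apply] using hb
    calc ‖x‖ * ‖(T - (V.subtypeL.comp (V.orthogonalProjectionOnto)).comp T) u‖
        ≤ ‖x‖ * δ := mul_le_mul_of_nonneg_left h2 (norm_nonneg x)
      _ = δ * ‖x‖ := mul_comm _ _

end aux

/-- For `T ∈ 𝓛_g`, the `‖·‖_g`-distance from `T` to the finite-rank operators equals
`limsup_j g(j)⁻¹ μ_j(T)`; in particular `T` is in the closure of the finite-rank operators
if and only if `μ_j(T) = o(g j)`. -/
theorem dist_finiteRank_eq_limsup {H : Type*} [NormedAddCommGroup H] [InnerProductSpace ℂ H]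
    [CompleteSpace H]
    (ρ : ℝ) (hρ : ρ < 0) (g : ℝ → ℝ)
    (hpos : ∀ t ∈ Set.Ici (0:ℝ), 0 < g t)
    (hcont : ContinuousOn g (Set.Ici (0:ℝ)))
    (hdec : ∃ b ≥ (0:ℝ), AntitoneOn g (Set.Ici b))
    (hrv : ∀ l : ℝ, 0 < l → Tendsto (fun t => g (l * t) / g t) atTop (𝓝 (l ^ ρ)))
    (T : H →L[ℂ] H) (hT : IsCompactOperator T)
    (hmem : (fun j : ℕ => singVal T j) =O[atTop] fun j : ℕ => g j) :
    (⨅ (R : H →L[ℂ] H) (_ : FiniteDimensional ℂ (LinearMap.range (R : H →ₗ[ℂ] H))), wnorm g (T - R))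
        = ENNReal.ofReal (Filter.limsup (fun j : ℕ => (g j)⁻¹ * singVal T j) atTop) ∧
    ((⨅ (R : H →L[ℂ] H) (_ : FiniteDimensional ℂ (LinearMap.range (R : H →ₗ[ℂ] H))), wnorm g (T - R)) = 0
        ↔ (fun j : ℕ => singVal T j) =o[atTop] fun j : ℕ => g j) := by
  obtain ⟨b, hb0, hanti⟩ := hdec
  have hinv1 : ∀ (x s : ℝ), x ≠ 0 → (x⁻¹ * s) * x = s := fun x s hx => by
    rw [mul_comm x⁻¹ s, mul_assoc, inv_mul_cancel₀ hx, mul_one]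
  have hinv2 : ∀ (x s : ℝ), x ≠ 0 → x⁻¹ * (s * x) = s := fun x s hx => by
    rw [← mul_assoc, mul_comm x⁻¹ s, mul_assoc, inv_mul_cancel₀ hx, mul_one]
  set a : ℕ → ℝ := fun j => (g j)⁻¹ * singVal T j with ha_def
  set L : ℝ := limsup a atTop with hL_def
  have hgpos : ∀ j : ℕ, 0 < g j := fun j => hpos _ (Set.mem_Ici.mpr (Nat.cast_nonneg j))
  have hgpos' : ∀ t : ℝ, 0 ≤ t → 0 < g t := fun t ht => hpos t ht
  have ha0 : ∀ j, 0 ≤ a j := fun j =>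
    mul_nonneg (inv_nonneg.mpr (hgpos j).le) (singVal_nonneg T j)
  have hbddle : IsBoundedUnder (· ≤ ·) atTop a := by
    obtain ⟨C, hC⟩ := hmem.isBigOWith
    rw [Asymptotics.isBigOWith_iff] at hC
    refine ⟨C, ?_⟩
    rw [eventually_map]
    filter_upwards [hC] with j hj
    rw [Real.norm_of_nonneg (singVal_nonneg T j), Real.norm_of_nonneg (hgpos j).le] at hj
    calc a j = (g j)⁻¹ * singVal T j := rfl
      _ ≤ (g j)⁻¹ * (C * g j) :=
        mul_le_mul_of_nonneg_left hj (inv_nonneg.mpr (hgpos j).le)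
      _ = C := by
        rw [mul_comm C, ← mul_assoc, inv_mul_cancel₀ (hgpos j).ne', one_mul]
  have hbddge : IsBoundedUnder (· ≥ ·) atTop a :=
    ⟨0, by rw [eventually_map]; exact Eventually.of_forall ha0⟩
  have hcobdd : IsCoboundedUnder (· ≤ ·) atTop a := hbddge.isCoboundedUnder_le
  have hL0 : 0 ≤ L := le_limsup_of_frequently_le (Frequently.of_forall ha0) hbddle
  -- ## Lower bound
  have key_lower : ∀ (R : H →L[ℂ] H), FiniteDimensional ℂ (LinearMap.range (R : H →ₗ[ℂ] H)) →
      ENNReal.ofReal L ≤ wnorm g (T - R) := by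
    intro R hfin
    haveI := hfin
    set J : ℕ := Module.finrank ℂ (LinearMap.range (R : H →ₗ[ℂ] H)) with hJ
    have hrank : Module.rank ℂ (LinearMap.range (R : H →ₗ[ℂ] H)) ≤ (J : Cardinal) :=
      (Module.finrank_eq_rank ℂ _).ge
    have core : ∀ c : ℝ, 0 ≤ c → c < L → ENNReal.ofReal c ≤ wnorm g (T - R) := by
      intro c hc0 hcL
      obtain ⟨lam, hclam, hlam1⟩ : ∃ lam : ℝ, c < lam ^ ρ * L ∧ 1 < lam := by
        have hcont1 : ContinuousAt (fun l : ℝ => l ^ ρ * L) 1 :=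
          (Real.continuousAt_rpow_const 1 ρ (Or.inl one_ne_zero)).mul continuousAt_const
        have hcL' : c < (fun l : ℝ => l ^ ρ * L) 1 := by
          simpa [Real.one_rpow] using hcL
        have hev : ∀ᶠ l in 𝓝 (1:ℝ), c < l ^ ρ * L :=
          hcont1.eventually (eventually_gt_nhds hcL')
        have h2 : ∀ᶠ l in 𝓝[>] (1:ℝ), c < l ^ ρ * L ∧ 1 < l :=
          (hev.filter_mono nhdsWithin_le_nhds).and eventually_mem_nhdsWithin
        exact h2.exists
      have hlampos : (0:ℝ) < lam := lt_trans one_pos hlam1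
      set θ : ℝ := lam ^ ρ with hθ
      have hθpos : 0 < θ := Real.rpow_pos_of_pos hlampos ρ
      have hcθL : c / θ < L := (div_lt_iff₀ hθpos).mpr (by linarith [hclam])
      set c₂ : ℝ := (c / θ + L) / 2 with hc₂
      have hc₂L : c₂ < L := by rw [hc₂]; linarith
      have hc₂pos : 0 < c₂ := by
        have h3 : 0 ≤ c / θ := div_nonneg hc0 hθpos.le
        have hLpos : 0 < L := lt_of_le_of_lt hc0 hcL
        rw [hc₂]; linarith
      have hcc₂ : c / c₂ < θ := by
        rw [div_lt_iff₀ hc₂pos]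
        have h3 : c / θ < c₂ := by rw [hc₂]; linarith
        calc c = (c / θ) * θ := (div_mul_cancel₀ c hθpos.ne').symm
          _ < c₂ * θ := mul_lt_mul_of_pos_right h3 hθpos
          _ = θ * c₂ := mul_comm _ _
      have hev1 : ∀ᶠ k : ℕ in atTop, c / c₂ < g (lam * k) / g k :=
        ((hrv lam hlampos).comp tendsto_natCast_atTop_atTop).eventually
          (eventually_gt_nhds hcc₂)
      have hev2 : ∀ᶠ k : ℕ in atTop, b ≤ (k:ℝ) :=
        tendsto_natCast_atTop_atTop.eventually (eventually_ge_atTop b)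
      have hev3 : ∀ᶠ k : ℕ in atTop, (k:ℝ) + (J:ℝ) ≤ lam * k := by
        filter_upwards [tendsto_natCast_atTop_atTop.eventually
          (eventually_ge_atTop ((J:ℝ) / (lam - 1)))] with k hk
        have hl1 : (0:ℝ) < lam - 1 := by linarith
        rw [div_le_iff₀ hl1] at hk
        nlinarith [hk]
      have hevk : ∀ᶠ k : ℕ in atTop,
          b ≤ (k:ℝ) ∧ ((k:ℝ) + (J:ℝ) ≤ lam * k ∧ c / c₂ < g (lam * k) / g k) :=
        hev2.and (hev3.and hev1)
      have hevj : ∀ᶠ j : ℕ in atTop,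
          b ≤ ((j - J : ℕ):ℝ) ∧ (((j - J : ℕ):ℝ) + (J:ℝ) ≤ lam * ((j - J : ℕ):ℝ) ∧
            c / c₂ < g (lam * ((j - J : ℕ):ℝ)) / g ((j - J : ℕ):ℝ)) :=
        (tendsto_sub_atTop_nat J).eventually hevk
      have hfreq : ∃ᶠ j in atTop, c₂ < a j := frequently_lt_of_lt_limsup hcobdd hc₂L
      obtain ⟨j, hja, hjc, hjJ⟩ :=
        (hfreq.and_eventually (hevj.and (eventually_ge_atTop J))).exists
      obtain ⟨hkb, hklam, hkratio⟩ := hjc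
      set k : ℕ := j - J with hk
      have hkJ : k + J = j := Nat.sub_add_cancel hjJ
      have hcastj : ((j:ℕ):ℝ) = (k:ℝ) + (J:ℝ) := by
        rw [← hkJ]; push_cast; ring
      have hgk : 0 < g k := hgpos k
      have hglamk : 0 < g (lam * k) := hgpos' _ (by positivity)
      have h5 : c * g k ≤ c₂ * g (lam * k) := by
        have h6 : (c / c₂) * g k < g (lam * k) := by
          rw [lt_div_iff₀ hgk] at hkratio
          exact hkratio
        calc c * g k = c₂ * ((c / c₂) * g k) := by
              rw [← mul_assoc, mul_comm c₂ (c / c₂), div_mul_cancel₀ c hc₂pos.ne']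
          _ ≤ c₂ * g (lam * k) := mul_le_mul_of_nonneg_left h6.le hc₂pos.le
      have h7 : g (lam * k) ≤ g ((k:ℝ) + (J:ℝ)) := by
        refine hanti ?_ ?_ hklam
        · exact Set.mem_Ici.mpr (by have := Nat.cast_nonneg (α := ℝ) J; linarith)
        · exact Set.mem_Ici.mpr (by have := Nat.cast_nonneg (α := ℝ) J; linarith)
      have h8 : c₂ * g ((j:ℕ):ℝ) < singVal T j := by
        have h9 := mul_lt_mul_of_pos_right hja (hgpos j)
        have h10 : ((g (j:ℕ))⁻¹ * singVal T j) * g (j:ℕ) = singVal T j :=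
          hinv1 _ _ (hgpos j).ne'
        rwa [h10] at h9
      have hchain : c * g k < singVal T j := by
        have h11 : c₂ * g (lam * k) ≤ c₂ * g ((k:ℝ) + (J:ℝ)) :=
          mul_le_mul_of_nonneg_left h7 hc₂pos.le
        rw [hcastj] at h8
        linarith
      have hfan : singVal T j ≤ singVal (T - R) k := by
        rw [← hkJ]; exact fan T R hrank k
      have hfin2 : c ≤ (g (k:ℕ))⁻¹ * singVal (T - R) k := by
        have h12 : c * g k ≤ singVal (T - R) k := (hchain.le.trans hfan)
        have h13 := mul_le_mul_of_nonneg_left h12 (inv_nonneg.mpr hgk.le)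
        calc c = (g (k:ℕ))⁻¹ * (c * g k) := (hinv2 _ _ hgk.ne').symm
          _ ≤ (g (k:ℕ))⁻¹ * singVal (T - R) k := h13
      calc ENNReal.ofReal c ≤ ENNReal.ofReal ((g (k:ℕ))⁻¹ * singVal (T - R) k) :=
            ENNReal.ofReal_le_ofReal hfin2
        _ ≤ wnorm g (T - R) := by
            rw [wnorm]
            exact le_iSup (fun i : ℕ => ENNReal.ofReal ((g i)⁻¹ * singVal (T - R) i)) k
    by_cases hL : L ≤ 0
    · simp [ENNReal.ofReal_eq_zero.mpr hL]
    push_neg at hL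
    refine ENNReal.le_of_forall_pos_le_add fun ε hε _ => ?_
    have hεR : (0:ℝ) < (ε:ℝ) := hε
    by_cases hεL : L ≤ (ε:ℝ)
    · calc ENNReal.ofReal L ≤ ENNReal.ofReal (ε:ℝ) := ENNReal.ofReal_le_ofReal hεL
        _ = (ε : ℝ≥0∞) := ENNReal.ofReal_coe_nnreal
        _ ≤ wnorm g (T - R) + ε := le_add_self
    push_neg at hεL
    have hc := core (L - ε) (by linarith) (by linarith)
    calc ENNReal.ofReal L = ENNReal.ofReal ((L - (ε:ℝ)) + (ε:ℝ)) := by ring_nf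
      _ ≤ ENNReal.ofReal (L - (ε:ℝ)) + ENNReal.ofReal (ε:ℝ) := ENNReal.ofReal_add_le
      _ ≤ wnorm g (T - R) + ε :=
          add_le_add hc (le_of_eq ENNReal.ofReal_coe_nnreal)
  -- ## Upper bound
  have key_upper : ∀ ε : ℝ, 0 < ε → ∃ (R : H →L[ℂ] H)
      (_ : FiniteDimensional ℂ (LinearMap.range (R : H →ₗ[ℂ] H))),
      wnorm g (T - R) ≤ ENNReal.ofReal (L + ε) := by
    intro ε hε
    have hev : ∀ᶠ j : ℕ in atTop, a j < L + ε :=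
      eventually_lt_of_limsup_lt (by rw [← hL_def]; linarith) hbddle
    obtain ⟨K, hK⟩ := eventually_atTop.mp hev
    have hne : (Finset.range (K+1)).Nonempty := ⟨0, by simp⟩
    set m : ℝ := (Finset.range (K+1)).inf' hne (fun k => g k) with hm
    have hmpos : 0 < m := by
      rw [hm, Finset.lt_inf'_iff]
      exact fun i _ => hgpos i
    obtain ⟨V, hV, hVnorm⟩ := exists_proj_approx T hT (mul_pos hε hmpos)
    haveI := hV
    set P : H →L[ℂ] H := V.subtypeL.comp (V.orthogonalProjectionOnto) with hP
    refine ⟨P.comp T, ?_, ?_⟩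
    · have hle : LinearMap.range ((P.comp T) : H →ₗ[ℂ] H) ≤ V := by
        rintro _ ⟨x, rfl⟩
        exact (V.orthogonalProjectionOnto (T x)).2
      exact Submodule.finiteDimensional_of_le hle
    · rw [wnorm]
      refine iSup_le fun k => ?_
      refine ENNReal.ofReal_le_ofReal ?_
      have hbound : singVal (T - P.comp T) k ≤ (L + ε) * g k := by
        rcases le_or_gt K k with hk | hk
        · have h1 : singVal (T - P.comp T) k ≤ singVal T k := singVal_proj_le T V k
          have h2 : a k < L + ε := hK k hk
          have h3 := mul_lt_mul_of_pos_right h2 (hgpos k)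
          have h4 : ((g (k:ℕ))⁻¹ * singVal T k) * g (k:ℕ) = singVal T k :=
            hinv1 _ _ (hgpos k).ne'
          rw [h4] at h3
          linarith
        · have h1 : singVal (T - P.comp T) k ≤ ‖T - P.comp T‖ := singVal_le_norm _ k
          have h3 : m ≤ g k := Finset.inf'_le _ (by simp [Finset.mem_range]; omega)
          nlinarith [hgpos k, hε, hL0]
      calc (g (k:ℕ))⁻¹ * singVal (T - P.comp T) k ≤ (g (k:ℕ))⁻¹ * ((L + ε) * g k) :=
            mul_le_mul_of_nonneg_left hbound (inv_nonneg.mpr (hgpos k).le)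
        _ = L + ε := hinv2 _ _ (hgpos k).ne'
  -- ## Assembly
  have hmain : (⨅ (R : H →L[ℂ] H) (_ : FiniteDimensional ℂ (LinearMap.range (R : H →ₗ[ℂ] H))),
      wnorm g (T - R)) = ENNReal.ofReal L := by
    apply le_antisymm
    · refine ENNReal.le_of_forall_pos_le_add fun ε hε _ => ?_
      have hεR : (0:ℝ) < (ε:ℝ) := hε
      obtain ⟨R, hR, hw⟩ := key_upper ε hεR
      calc (⨅ (R : H →L[ℂ] H) (_ : FiniteDimensional ℂ (LinearMap.range (R : H →ₗ[ℂ] H))),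
            wnorm g (T - R)) ≤ wnorm g (T - R) := iInf₂_le R hR
        _ ≤ ENNReal.ofReal (L + ε) := hw
        _ = ENNReal.ofReal L + ENNReal.ofReal (ε:ℝ) := ENNReal.ofReal_add hL0 hεR.le
        _ = ENNReal.ofReal L + ε := by rw [ENNReal.ofReal_coe_nnreal]
    · exact le_iInf fun R => le_iInf fun hR => key_lower R hR
  refine ⟨hmain, ?_⟩
  rw [hmain]
  constructor
  · intro h0
    have hLeq : L = 0 := le_antisymm (by rwa [ENNReal.ofReal_eq_zero] at h0) hL0
    have hliminf0 : liminf a atTop = 0 := by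
      apply le_antisymm
      · rw [← hLeq, hL_def]; exact liminf_le_limsup hbddle hbddge
      · exact le_liminf_of_le hbddle.isCoboundedUnder_ge (Eventually.of_forall ha0)
    have htend : Tendsto a atTop (𝓝 0) :=
      tendsto_of_liminf_eq_limsup hliminf0 (by rw [← hL_def, hLeq]) hbddle hbddge
    rw [Asymptotics.isLittleO_iff]
    intro c hc
    filter_upwards [htend.eventually (eventually_lt_nhds hc)] with j hj
    rw [Real.norm_of_nonneg (singVal_nonneg T j), Real.norm_of_nonneg (hgpos j).le]
    have h3 := mul_lt_mul_of_pos_right hj (hgpos j)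
    have h4 : ((g (j:ℕ))⁻¹ * singVal T j) * g (j:ℕ) = singVal T j :=
      hinv1 _ _ (hgpos j).ne'
    have h5 : a j * g j = ((g (j:ℕ))⁻¹ * singVal T j) * g (j:ℕ) := rfl
    rw [h5, h4] at h3
    linarith
  · intro ho
    have htend : Tendsto a atTop (𝓝 0) := by
      rw [Asymptotics.isLittleO_iff] at ho
      rw [NormedAddCommGroup.tendsto_nhds_zero]
      intro ε hε
      filter_upwards [ho (half_pos hε)] with j hj
      rw [Real.norm_of_nonneg (singVal_nonneg T j), Real.norm_of_nonneg (hgpos j).le] at hj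
      rw [Real.norm_of_nonneg (ha0 j)]
      have h2 : a j ≤ ε / 2 := by
        have h6 := mul_le_mul_of_nonneg_left hj (inv_nonneg.mpr (hgpos j).le)
        calc a j = (g (j:ℕ))⁻¹ * singVal T j := rfl
          _ ≤ (g (j:ℕ))⁻¹ * (ε / 2 * g (j:ℕ)) := h6
          _ = ε / 2 := hinv2 _ _ (hgpos j).ne'
      linarith
    have hLeq : L = 0 := by rw [hL_def]; exact htend.limsup_eq
    rw [hLeq]
    simp
end

section
/- Let g : [0, ∞) → (0, ∞) be a continuous RV_ρ-function with −1 < ρ < 0, and set G(t) = ∫₀^t g(s) ds. Then the weak Lorentz ideal 𝓛_g = {T : μ_j(T) = O(g(j))} coincides with the Lorentz ideal 𝓜_G = {T : Σ_{j<N} μ_j(T) = O(G(N))}, with equivalent quasi-norms: there are constants C, C′ > 0 such that ‖T‖_G ≤ C‖T‖_g and ‖T‖_g ≤ C′‖T‖_G for all compact T, where ‖T‖_G = sup_N G(N)^{-1} Σ_{j<N} μ_j(T) and ‖T‖_g = sup_j g(j)^{-1} μ_j(T). -/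
open Filter Topology ENNReal NNReal

/-- The Lorentz (Marcinkiewicz) norm `‖T‖_G = sup_{N ≥ 1} G(N)⁻¹ ∑_{j<N} μ_j(T)`, where
`G t = ∫₀^t g`, valued in `ℝ≥0∞`. -/
noncomputable def Mnorm {H : Type*} [NormedAddCommGroup H] [InnerProductSpace ℂ H]
    (g : ℝ → ℝ) (T : H →L[ℂ] H) : ℝ≥0∞ :=
  ⨆ N : ℕ, ENNReal.ofReal
    ((∫ s in (0:ℝ)..((N:ℝ) + 1), g s)⁻¹ * ∑ j ∈ Finset.range (N + 1), singVal T j)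



section sv
variable {H : Type*} [NormedAddCommGroup H] [InnerProductSpace ℂ H]

lemma singVal_set_mem (T : H →L[ℂ] H) (j : ℕ) :
    ‖T‖ ∈ {c : ℝ | ∃ R : H →L[ℂ] H,
      Module.rank ℂ (LinearMap.range (R : H →ₗ[ℂ] H)) ≤ (j : Cardinal) ∧ c = ‖T - R‖} := by
  refine ⟨0, ?_, by simp⟩
  have h : LinearMap.range ((0 : H →L[ℂ] H) : H →ₗ[ℂ] H) = ⊥ := by
    ext x; simp [LinearMap.mem_range, eq_comm]
  rw [h, rank_bot]
  exact zero_le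

lemma singVal_antitone (T : H →L[ℂ] H) {j k : ℕ} (hjk : j ≤ k) :
    singVal T k ≤ singVal T j := by
  apply csInf_le_csInf (singVal_bddBelow T k) ⟨‖T‖, singVal_set_mem T j⟩
  rintro c ⟨R, hR, rfl⟩
  exact ⟨R, le_trans hR (by exact_mod_cast Nat.cast_le.2 hjk), rfl⟩

lemma singVal_card_bound (T : H →L[ℂ] H) (j : ℕ) :
    ((j:ℝ) + 1) * singVal T j ≤ ∑ i ∈ Finset.range (j + 1), singVal T i := by
  have h := Finset.card_nsmul_le_sum (Finset.range (j + 1)) (fun i => singVal T i)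
    (singVal T j) (fun i hi => singVal_antitone T (Nat.lt_succ_iff.1 (Finset.mem_range.1 hi)))
  rw [Finset.card_range, nsmul_eq_mul] at h
  push_cast at h
  linarith

end sv
/-- Upgrade an eventual bound on a nonnegative sequence to a global positive bound. -/
lemma nat_bound (f : ℕ → ℝ) (hf : ∀ n, 0 ≤ f n) (C : ℝ) (N₀ : ℕ)
    (h : ∀ n, N₀ ≤ n → f n ≤ C) : ∃ D : ℝ, 0 < D ∧ ∀ n, f n ≤ D := by
  have h3 : (0:ℝ) ≤ ∑ k ∈ Finset.range N₀, f k :=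
    Finset.sum_nonneg fun k _ => hf k
  refine ⟨max C 0 + (∑ k ∈ Finset.range N₀, f k) + 1, by positivity, fun n => ?_⟩
  rcases le_or_gt N₀ n with h1 | h1
  · have h2 := h n h1
    nlinarith [le_max_left C 0]
  · have h2 : f n ≤ ∑ k ∈ Finset.range N₀, f k :=
      Finset.single_le_sum (fun k _ => hf k) (Finset.mem_range.2 h1)
    nlinarith [le_max_right C 0]

section g
variable (g : ℝ → ℝ)
    (hpos : ∀ t ∈ Set.Ici (0:ℝ), 0 < g t)
    (hcont : ContinuousOn g (Set.Ici (0:ℝ)))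

include hcont in
lemma g_intble {u v : ℝ} (hu : 0 ≤ u) (hv : 0 ≤ v) :
    IntervalIntegrable g MeasureTheory.volume u v :=
by
  apply (hcont.mono ?_).intervalIntegrable
  intro x hx
  have := hx.1
  simp only [Set.mem_Ici]
  exact le_trans (le_min hu hv) (by simpa using hx.1)

include hpos hcont in
/-- `G` is monotone on nonnegative reals. -/
lemma G_mono {u v : ℝ} (hu : 0 ≤ u) (huv : u ≤ v) :
    (∫ s in (0:ℝ)..u, g s) ≤ ∫ s in (0:ℝ)..v, g s := by
  have hv : 0 ≤ v := le_trans hu huv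
  rw [← intervalIntegral.integral_add_adjacent_intervals
      (g_intble g hcont le_rfl hu) (g_intble g hcont hu hv)]
  have : 0 ≤ ∫ s in u..v, g s := by
    apply intervalIntegral.integral_nonneg huv
    intro x hx; exact (hpos x (le_trans hu hx.1)).le
  linarith

include hpos hcont in
/-- positivity of `G t` for `t ≥ 1`. -/
lemma G_pos {t : ℝ} (ht : 1 ≤ t) : 0 < ∫ s in (0:ℝ)..t, g s := by
  have h1 : (0:ℝ) < ∫ s in (0:ℝ)..1, g s := by
    apply intervalIntegral.intervalIntegral_pos_of_pos_on
      (g_intble g hcont le_rfl zero_le_one)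
    · intro x hx; exact hpos x hx.1.le
    · norm_num
  exact lt_of_lt_of_le h1 (G_mono g hpos hcont zero_le_one ht)

end g

section main
variable (g : ℝ → ℝ)
    (hpos : ∀ t ∈ Set.Ici (0:ℝ), 0 < g t)
    (hcont : ContinuousOn g (Set.Ici (0:ℝ)))

include hpos hcont in
/-- Lemma A: the Riemann sums of `g` are dominated by its integral. -/
lemma sum_le_int (b : ℝ) (hb0 : 0 ≤ b) (hanti : AntitoneOn g (Set.Ici b)) :
    ∃ c : ℝ, 0 < c ∧ ∀ N : ℕ,
      (∑ j ∈ Finset.range (N + 1), g j) ≤ c * ∫ s in (0:ℝ)..((N:ℝ)+1), g s := by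
  obtain ⟨a, hab⟩ : ∃ a : ℕ, b ≤ (a : ℝ) := ⟨⌈b⌉₊, Nat.le_ceil b⟩
  have hKnn : 0 ≤ ∑ j ∈ Finset.range (a + 1), g j :=
    Finset.sum_nonneg fun j _ => (hpos _ (Set.mem_Ici.2 (Nat.cast_nonneg j))).le
  set K : ℝ := ∑ j ∈ Finset.range (a + 1), g j with hK
  have hεpos : 0 < ∫ s in (0:ℝ)..1, g s := G_pos g hpos hcont le_rfl
  set ε : ℝ := ∫ s in (0:ℝ)..1, g s with hε
  -- eventual bound on the ratio
  have hev : ∀ N : ℕ, a + 1 ≤ N →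
      (∑ j ∈ Finset.range (N + 1), g j) ≤ K + ∫ s in (0:ℝ)..((N:ℝ)+1), g s := by
    intro N hN
    have hsplit : (∑ j ∈ Finset.range (N + 1), g j)
        = K + ∑ j ∈ Finset.Ico (a + 1) (N + 1), g j := by
      rw [hK, Finset.range_eq_Ico, Finset.range_eq_Ico]
      exact (Finset.sum_Ico_consecutive (fun j : ℕ => g j) (Nat.zero_le (a+1))
        (by omega : a + 1 ≤ N + 1)).symm
    have hmid : (∑ j ∈ Finset.Ico (a + 1) (N + 1), g j)
        ≤ ∫ s in (a:ℝ)..(N:ℝ), g s := by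
      have h1 : (∑ j ∈ Finset.Ico (a + 1) (N + 1), g j)
          = ∑ i ∈ Finset.Ico a N, g ((i + 1 : ℕ) : ℝ) := by
        rw [Finset.sum_Ico_eq_sum_range, Finset.sum_Ico_eq_sum_range]
        apply Finset.sum_congr (by congr 1; omega)
        intro i _
        congr 1
        push_cast; ring
      rw [h1]
      exact AntitoneOn.sum_le_integral_Ico (f := g) (a := a) (b := N)
        (by omega) (hanti.mono (fun x hx => le_trans hab hx.1))
    have hint : (∫ s in (a:ℝ)..(N:ℝ), g s) ≤ ∫ s in (0:ℝ)..((N:ℝ)+1), g s := by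
      have e1 : (∫ s in (0:ℝ)..(a:ℝ), g s) + (∫ s in (a:ℝ)..(N:ℝ), g s)
          = ∫ s in (0:ℝ)..(N:ℝ), g s :=
        intervalIntegral.integral_add_adjacent_intervals
          (g_intble g hcont le_rfl (Nat.cast_nonneg a))
          (g_intble g hcont (Nat.cast_nonneg a) (Nat.cast_nonneg N))
      have e2 : 0 ≤ ∫ s in (0:ℝ)..(a:ℝ), g s := by
        apply intervalIntegral.integral_nonneg (Nat.cast_nonneg a)
        intro x hx; exact (hpos x hx.1).le
      have e3 := G_mono g hpos hcont (Nat.cast_nonneg N)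
        (by linarith : (N:ℝ) ≤ (N:ℝ) + 1)
      linarith
    linarith [hsplit, hmid, hint]
  -- global bound via nat_bound
  have hdenpos : ∀ N : ℕ, 0 < ∫ s in (0:ℝ)..((N:ℝ)+1), g s := fun N =>
    G_pos g hpos hcont (by linarith [Nat.cast_nonneg (α := ℝ) N])
  have hnumnn : ∀ N : ℕ, 0 ≤ ∑ j ∈ Finset.range (N + 1), g j := fun N =>
    Finset.sum_nonneg fun j _ => (hpos _ (Set.mem_Ici.2 (Nat.cast_nonneg j))).le
  obtain ⟨D, hD, hDle⟩ := nat_bound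
    (fun N => (∑ j ∈ Finset.range (N + 1), g j) / ∫ s in (0:ℝ)..((N:ℝ)+1), g s)
    (fun N => div_nonneg (hnumnn N) (hdenpos N).le)
    (K / ε + 1) (a + 1)
    (by
      intro N hN
      have hden := hdenpos N
      have hden' : ε ≤ ∫ s in (0:ℝ)..((N:ℝ)+1), g s :=
        G_mono g hpos hcont zero_le_one (by linarith [Nat.cast_nonneg (α := ℝ) N])
      rw [div_le_iff₀ hden]
      have h1 := hev N hN
      have h2 : K / ε * ε ≤ K / ε * ∫ s in (0:ℝ)..((N:ℝ)+1), g s :=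
        mul_le_mul_of_nonneg_left hden' (by positivity)
      rw [div_mul_cancel₀ K hεpos.ne'] at h2
      nlinarith)
  refine ⟨D, hD, fun N => ?_⟩
  have := hDle N
  rw [div_le_iff₀ (hdenpos N)] at this
  linarith [this]

set_option maxHeartbeats 1000000 in
include hpos hcont in
/-- Karamata-type bound: `G(t) ≤ C t g(t)` for large `t`, from regular variation at `l = 2`. -/
lemma int_le_K (ρ : ℝ) (hρ : ρ < 0) (hρ' : -1 < ρ)
    (b : ℝ) (hb0 : 0 ≤ b) (hanti : AntitoneOn g (Set.Ici b))
    (hrv2 : Tendsto (fun t => g (2 * t) / g t) atTop (𝓝 ((2:ℝ) ^ ρ))) :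
    ∃ C : ℝ, 0 < C ∧ ∀ N : ℕ,
      (∫ s in (0:ℝ)..((N:ℝ)+1), g s) ≤ C * (((N:ℝ)+1) * g N) := by
  have h2ρ : (1:ℝ)/2 < (2:ℝ) ^ ρ := by
    have h := Real.rpow_lt_rpow_of_exponent_lt (x := 2) one_lt_two hρ'
    rw [Real.rpow_neg_one] at h
    linarith
  have h2ρ' : (2:ℝ) ^ ρ < 1 := by
    have h := Real.rpow_lt_rpow_of_exponent_lt (x := 2) one_lt_two hρ
    rw [Real.rpow_zero] at h
    linarith
  set p : ℝ := (1/2 + (2:ℝ) ^ ρ)/2 with hp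
  have hp1 : 1/2 < p := by rw [hp]; linarith
  have hp2 : p < (2:ℝ) ^ ρ := by rw [hp]; linarith
  have hppos : 0 < p := by linarith
  obtain ⟨t₀, ht₀⟩ := eventually_atTop.1 (hrv2.eventually_const_lt hp2)
  set t₁ : ℝ := max (max t₀ b) 1 with ht₁
  have ht₁1 : 1 ≤ t₁ := le_max_right _ _
  have ht₁0 : 0 < t₁ := lt_of_lt_of_le one_pos ht₁1
  have ht₁b : b ≤ t₁ := le_trans (le_max_right t₀ b) (le_max_left _ _)
  have ht₁t₀ : t₀ ≤ t₁ := le_trans (le_max_left t₀ b) (le_max_left _ _)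
  have hgpos : ∀ t : ℝ, 0 ≤ t → 0 < g t := fun t ht => hpos t ht
  have hg2 : ∀ t : ℝ, t₁ ≤ t → p * g t ≤ g (2 * t) := by
    intro t ht
    have h1 := ht₀ t (le_trans ht₁t₀ ht)
    have h2 : 0 < g t := hgpos t (by linarith)
    have := (lt_div_iff₀ h2).1 h1
    linarith
  have h2p1 : 0 < 2 * p - 1 := by linarith
  set A : ℝ := max ((∫ s in (0:ℝ)..t₁, g s) / (t₁ * g t₁)) (1/(2*p-1)) with hA
  have hApos : 0 < A := lt_of_lt_of_le (div_pos one_pos h2p1) (le_max_right _ _)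
  have hA1 : 1 ≤ A * (2*p - 1) := by
    have := le_max_right ((∫ s in (0:ℝ)..t₁, g s) / (t₁ * g t₁)) (1/(2*p-1))
    rw [div_le_iff₀ h2p1] at this
    linarith
  -- the dyadic bound
  have dyadic : ∀ n : ℕ,
      (∫ s in (0:ℝ)..((2:ℝ)^n * t₁), g s) ≤ A * ((2:ℝ)^n * t₁ * g ((2:ℝ)^n * t₁)) := by
    intro n
    induction n with
    | zero =>
      simp only [pow_zero, one_mul]
      have h0 := le_max_left ((∫ s in (0:ℝ)..t₁, g s) / (t₁ * g t₁)) (1/(2*p-1))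
      rw [div_le_iff₀ (mul_pos ht₁0 (hgpos t₁ ht₁0.le))] at h0
      exact le_trans h0 (le_of_eq (by ring))
    | succ n ih =>
      set u : ℝ := (2:ℝ)^n * t₁ with hu
      have hupos : 0 < u := by positivity
      have hu1 : t₁ ≤ u := by
        nlinarith [one_le_pow₀ (a := (2:ℝ)) one_le_two (n := n)]
      have h2u : (2:ℝ)^(n+1) * t₁ = 2 * u := by rw [hu]; ring
      rw [h2u]
      have hadd : (∫ s in (0:ℝ)..u, g s) + (∫ s in u..(2*u), g s)
          = ∫ s in (0:ℝ)..(2*u), g s :=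
        intervalIntegral.integral_add_adjacent_intervals
          (g_intble g hcont le_rfl hupos.le)
          (g_intble g hcont hupos.le (by linarith))
      have hmid : (∫ s in u..(2*u), g s) ≤ u * g u := by
        have h1 : (∫ s in u..(2*u), g s) ≤ ∫ _ in u..(2*u), g u := by
          apply intervalIntegral.integral_mono_on (by linarith)
            (g_intble g hcont hupos.le (by linarith)) intervalIntegrable_const
          intro x hx
          exact hanti (by simp only [Set.mem_Ici]; linarith)
            (by simp only [Set.mem_Ici]; linarith [hx.1]) hx.1
        rw [intervalIntegral.integral_const, smul_eq_mul] at h1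
        calc (∫ s in u..(2*u), g s) ≤ (2*u - u) * g u := h1
          _ = u * g u := by ring
      have hg2u : p * g u ≤ g (2 * u) := hg2 u hu1
      have hgu : 0 < g u := hgpos u hupos.le
      have hstep1 : A + 1 ≤ 2 * A * p := by nlinarith [hA1]
      have hstep2 : (A + 1) * (u * g u) ≤ (2 * A * p) * (u * g u) :=
        mul_le_mul_of_nonneg_right hstep1 (by positivity)
      have hstep3 : 2 * A * u * (p * g u) ≤ 2 * A * u * g (2 * u) :=
        mul_le_mul_of_nonneg_left hg2u (by positivity)
      nlinarith [hadd, hmid, ih, hstep2, hstep3]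
  -- bound for all t ≥ t₁
  have all_t : ∀ t : ℝ, t₁ ≤ t → (∫ s in (0:ℝ)..t, g s) ≤ 2 * A * (t * g t) := by
    have key : ∀ n : ℕ, ∀ t : ℝ, t₁ ≤ t → t ≤ (2:ℝ)^n * t₁ →
        (∫ s in (0:ℝ)..t, g s) ≤ 2 * A * (t * g t) := by
      intro n
      induction n with
      | zero =>
        intro t ht1 ht2
        simp only [pow_zero, one_mul] at ht2
        have htt : t = t₁ := le_antisymm ht2 ht1
        have hd := dyadic 0
        simp only [pow_zero, one_mul] at hd
        rw [htt]
        nlinarith [hd, mul_pos hApos (mul_pos ht₁0 (hgpos t₁ ht₁0.le))]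
      | succ n ih =>
        intro t ht1 ht2
        rcases le_or_gt t ((2:ℝ)^n * t₁) with h | h
        · exact ih t ht1 h
        · set v : ℝ := (2:ℝ)^(n+1) * t₁ with hv
          have hvt : t ≤ v := ht2
          have ht0 : 0 < t := by linarith
          have hc1 : (∫ s in (0:ℝ)..t, g s) ≤ ∫ s in (0:ℝ)..v, g s :=
            G_mono g hpos hcont ht0.le hvt
          have hc2 := dyadic (n+1)
          rw [← hv] at hc2
          have hc3 : g v ≤ g t := by
            apply hanti (Set.mem_Ici.2 (by linarith)) (Set.mem_Ici.2 (by linarith)) hvt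
          have hc4 : v ≤ 2 * t := by
            have : (2:ℝ)^(n+1) * t₁ = 2 * ((2:ℝ)^n * t₁) := by ring
            rw [hv, this]; linarith
          have hc5 : 0 < g v := hgpos v (by positivity)
          have e1 : A * (v * g v) ≤ A * ((2*t) * g v) :=
            mul_le_mul_of_nonneg_left (mul_le_mul_of_nonneg_right hc4 hc5.le) hApos.le
          have e2 : A * ((2*t) * g v) ≤ A * ((2*t) * g t) :=
            mul_le_mul_of_nonneg_left
              (mul_le_mul_of_nonneg_left hc3 (by linarith)) hApos.le
          nlinarith [hc1, hc2, e1, e2]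
    intro t ht
    obtain ⟨n, hn⟩ := pow_unbounded_of_one_lt (R := ℝ) t one_lt_two
    apply key n t ht
    nlinarith [pow_pos (zero_lt_two (α := ℝ)) n]
  -- integer version, eventually, then globally
  have hdenpos : ∀ N : ℕ, (0:ℝ) < ((N:ℝ)+1) * g N := fun N => by
    have := hgpos N (Nat.cast_nonneg N)
    nlinarith [Nat.cast_nonneg (α := ℝ) N]
  obtain ⟨C, hC, hCle⟩ := nat_bound
    (fun N => (∫ s in (0:ℝ)..((N:ℝ)+1), g s) / (((N:ℝ)+1) * g N))
    (fun N => div_nonneg (intervalIntegral.integral_nonneg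
      (by positivity) (fun x hx => (hpos x hx.1).le)) (hdenpos N).le)
    (2 * A) ⌈t₁⌉₊
    (by
      intro N hN
      have h1 : t₁ ≤ (N:ℝ) := le_trans (Nat.le_ceil t₁) (by exact_mod_cast hN)
      have h2 : t₁ ≤ (N:ℝ) + 1 := by linarith
      have h3 := all_t ((N:ℝ)+1) h2
      have h4 : g ((N:ℝ)+1) ≤ g N := by
        apply hanti (Set.mem_Ici.2 (by linarith)) (Set.mem_Ici.2 (by linarith)) (by linarith)
      rw [div_le_iff₀ (hdenpos N)]
      have e3 : 2 * A * (((N:ℝ)+1) * g ((N:ℝ)+1)) ≤ 2 * A * (((N:ℝ)+1) * g N) := by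
        apply mul_le_mul_of_nonneg_left _ (by positivity)
        exact mul_le_mul_of_nonneg_left h4 (by positivity)
      linarith)
  refine ⟨C, hC, fun N => ?_⟩
  have := hCle N
  rw [div_le_iff₀ (hdenpos N)] at this
  linarith

end main

set_option maxHeartbeats 1000000 in
/-- For `−1 < ρ < 0`, the weak Lorentz ideal `𝓛_g` coincides with the Lorentz ideal `𝓜_G`,
with equivalent quasi-norms. -/
theorem Lg_eq_MG {H : Type*} [NormedAddCommGroup H] [InnerProductSpace ℂ H]
    [CompleteSpace H]
    (ρ : ℝ) (hρ : ρ < 0) (hρ' : -1 < ρ) (g : ℝ → ℝ)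
    (hpos : ∀ t ∈ Set.Ici (0:ℝ), 0 < g t)
    (hcont : ContinuousOn g (Set.Ici (0:ℝ)))
    (hdec : ∃ b ≥ (0:ℝ), AntitoneOn g (Set.Ici b))
    (hrv : ∀ l : ℝ, 0 < l → Tendsto (fun t => g (l * t) / g t) atTop (𝓝 (l ^ ρ))) :
    ({T : H →L[ℂ] H | IsCompactOperator T ∧
        (fun j : ℕ => singVal T j) =O[atTop] fun j : ℕ => g j}
      = {T : H →L[ℂ] H | IsCompactOperator T ∧
        (fun N : ℕ => ∑ j ∈ Finset.range N, singVal T j)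
          =O[atTop] fun N : ℕ => ∫ s in (0:ℝ)..(N:ℝ), g s}) ∧
    ∃ C : ℝ≥0, 0 < C ∧ ∃ C' : ℝ≥0, 0 < C' ∧
      ∀ T : H →L[ℂ] H, IsCompactOperator T →
        Mnorm g T ≤ (C : ℝ≥0∞) * wnorm g T ∧ wnorm g T ≤ (C' : ℝ≥0∞) * Mnorm g T := by
  obtain ⟨b, hb0, hanti⟩ := hdec
  obtain ⟨c, hc, hcle⟩ := sum_le_int g hpos hcont b hb0 hanti
  obtain ⟨CK, hCK, hCKle⟩ := int_le_K g hpos hcont ρ hρ hρ' b hb0 hanti (hrv 2 two_pos)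
  have hgj : ∀ j : ℕ, 0 < g j := fun j => hpos _ (Set.mem_Ici.2 (Nat.cast_nonneg j))
  have hIpos : ∀ N : ℕ, 0 < ∫ s in (0:ℝ)..((N:ℝ)+1), g s := fun N =>
    G_pos g hpos hcont (by linarith [Nat.cast_nonneg (α := ℝ) N])
  have hInn : ∀ N : ℕ, 0 ≤ ∫ s in (0:ℝ)..(N:ℝ), g s := fun N =>
    intervalIntegral.integral_nonneg (Nat.cast_nonneg N) (fun x hx => (hpos x hx.1).le)
  -- sums of g over `range N` vs `∫₀^N g`
  have hsum : ∀ N : ℕ, (∑ j ∈ Finset.range N, g j) ≤ c * ∫ s in (0:ℝ)..(N:ℝ), g s := by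
    intro N
    cases N with
    | zero => simp
    | succ M =>
      have h := hcle M
      have hcast : ((M:ℝ) + 1) = ((M + 1 : ℕ) : ℝ) := by push_cast; ring
      rwa [hcast] at h
  constructor
  · -- set equality
    ext T
    simp only [Set.mem_setOf_eq]
    refine and_congr_right fun _hT => ⟨fun hO => ?_, fun hO => ?_⟩
    · -- forward
      rw [Asymptotics.isBigO_iff] at hO ⊢
      obtain ⟨C0, hC0⟩ := hO
      obtain ⟨M, hM⟩ := eventually_atTop.1 hC0
      obtain ⟨D, hD, hDle⟩ := nat_bound (fun n => singVal T n / g n)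
        (fun n => div_nonneg (singVal_nonneg T n) (hgj n).le) |C0| M
        (by
          intro n hn
          have h1 := hM n hn
          rw [Real.norm_eq_abs, Real.norm_eq_abs, abs_of_nonneg (singVal_nonneg T n),
            abs_of_nonneg (hgj n).le] at h1
          rw [div_le_iff₀ (hgj n)]
          calc singVal T n ≤ C0 * g n := h1
            _ ≤ |C0| * g n := mul_le_mul_of_nonneg_right (le_abs_self C0) (hgj n).le)
      have hDg : ∀ n : ℕ, singVal T n ≤ D * g n := by
        intro n
        have := hDle n
        rw [div_le_iff₀ (hgj n)] at this
        exact this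
      refine ⟨D * c, Eventually.of_forall fun N => ?_⟩
      have h2 : (∑ j ∈ Finset.range N, singVal T j) ≤ D * ∑ j ∈ Finset.range N, g j := by
        rw [Finset.mul_sum]
        exact Finset.sum_le_sum fun j _ => hDg j
      have h3 : D * (∑ j ∈ Finset.range N, g j) ≤ D * (c * ∫ s in (0:ℝ)..(N:ℝ), g s) :=
        mul_le_mul_of_nonneg_left (hsum N) hD.le
      rw [Real.norm_eq_abs, Real.norm_eq_abs,
        abs_of_nonneg (Finset.sum_nonneg fun j _ => singVal_nonneg T j),
        abs_of_nonneg (hInn N)]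
      nlinarith
    · -- backward
      rw [Asymptotics.isBigO_iff] at hO ⊢
      obtain ⟨C0, hC0⟩ := hO
      obtain ⟨M, hM⟩ := eventually_atTop.1 hC0
      refine ⟨|C0| * CK, eventually_atTop.2 ⟨M, fun j hj => ?_⟩⟩
      have h1 := hM (j + 1) (by omega)
      have hcast : ((j + 1 : ℕ) : ℝ) = (j:ℝ) + 1 := by push_cast; ring
      rw [hcast] at h1
      rw [Real.norm_eq_abs, Real.norm_eq_abs,
        abs_of_nonneg (Finset.sum_nonneg fun i _ => singVal_nonneg T i),
        abs_of_nonneg (hIpos j).le] at h1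
      have h2 : (∑ i ∈ Finset.range (j + 1), singVal T i)
          ≤ |C0| * ∫ s in (0:ℝ)..((j:ℝ)+1), g s :=
        le_trans h1 (mul_le_mul_of_nonneg_right (le_abs_self C0) (hIpos j).le)
      have h3 : |C0| * (∫ s in (0:ℝ)..((j:ℝ)+1), g s)
          ≤ |C0| * (CK * (((j:ℝ)+1) * g j)) :=
        mul_le_mul_of_nonneg_left (hCKle j) (abs_nonneg C0)
      have h4 := singVal_card_bound T j
      have h5 : ((j:ℝ)+1) * singVal T j ≤ |C0| * CK * (((j:ℝ)+1) * g j) := by nlinarith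
      have hj1 : (0:ℝ) < (j:ℝ) + 1 := by positivity
      rw [Real.norm_eq_abs, Real.norm_eq_abs, abs_of_nonneg (singVal_nonneg T j),
        abs_of_nonneg (hgj j).le]
      have h6 : ((j:ℝ)+1) * singVal T j ≤ ((j:ℝ)+1) * (|C0| * CK * g j) := by
        nlinarith [h5]
      exact (mul_le_mul_iff_right₀ hj1).mp h6
  · -- norm equivalence
    refine ⟨c.toNNReal, Real.toNNReal_pos.2 hc, CK.toNNReal, Real.toNNReal_pos.2 hCK,
      fun T _hT => ⟨?_, ?_⟩⟩
    · -- Mnorm ≤ c * wnorm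
      by_cases hw : wnorm g T = ⊤
      · rw [hw, ENNReal.mul_top (by
          simp only [ne_eq, ENNReal.coe_eq_zero, Real.toNNReal_eq_zero, not_le]
          exact hc)]
        exact le_top
      · apply iSup_le
        intro N
        set w : ℝ := (wnorm g T).toReal with hwdef
        have hwnn : 0 ≤ w := ENNReal.toReal_nonneg
        have hμ : ∀ j : ℕ, singVal T j ≤ g j * w := by
          intro j
          have h1 : ENNReal.ofReal ((g j)⁻¹ * singVal T j) ≤ wnorm g T :=
            le_iSup (fun i : ℕ => ENNReal.ofReal ((g i)⁻¹ * singVal T i)) j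
          have h2 := (ENNReal.ofReal_le_iff_le_toReal hw).1 h1
          have h3 : (g j)⁻¹ * singVal T j ≤ w := h2
          have h4 := mul_le_mul_of_nonneg_left h3 (hgj j).le
          rwa [mul_inv_cancel_left₀ (hgj j).ne'] at h4
        have hS : (∑ j ∈ Finset.range (N+1), singVal T j)
            ≤ (c * ∫ s in (0:ℝ)..((N:ℝ)+1), g s) * w := by
          calc (∑ j ∈ Finset.range (N+1), singVal T j)
              ≤ ∑ j ∈ Finset.range (N+1), g j * w :=
                Finset.sum_le_sum fun j _ => hμ j
            _ = (∑ j ∈ Finset.range (N+1), g j) * w := by rw [Finset.sum_mul]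
            _ ≤ (c * ∫ s in (0:ℝ)..((N:ℝ)+1), g s) * w :=
                mul_le_mul_of_nonneg_right (hcle N) hwnn
        have hscal : (∫ s in (0:ℝ)..((N:ℝ)+1), g s)⁻¹
            * ∑ j ∈ Finset.range (N+1), singVal T j ≤ c * w := by
          rw [inv_mul_le_iff₀ (hIpos N)]
          calc (∑ j ∈ Finset.range (N+1), singVal T j)
              ≤ (c * ∫ s in (0:ℝ)..((N:ℝ)+1), g s) * w := hS
            _ = (∫ s in (0:ℝ)..((N:ℝ)+1), g s) * (c * w) := by ring
        calc ENNReal.ofReal ((∫ s in (0:ℝ)..((N:ℝ)+1), g s)⁻¹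
              * ∑ j ∈ Finset.range (N+1), singVal T j)
            ≤ ENNReal.ofReal (c * w) := ENNReal.ofReal_le_ofReal hscal
          _ = ENNReal.ofReal c * ENNReal.ofReal w := ENNReal.ofReal_mul hc.le
          _ = (c.toNNReal : ℝ≥0∞) * wnorm g T := by
              rw [ENNReal.ofReal, hwdef, ENNReal.ofReal_toReal hw]
    · -- wnorm ≤ CK * Mnorm
      apply iSup_le
      intro j
      have hμj : 0 ≤ singVal T j := singVal_nonneg T j
      have hSnn : 0 ≤ ∑ i ∈ Finset.range (j+1), singVal T i :=
        Finset.sum_nonneg fun i _ => singVal_nonneg T i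
      have h1 := singVal_card_bound T j
      have h2 := hCKle j
      have hI := hIpos j
      have hscal : (g j)⁻¹ * singVal T j
          ≤ CK * ((∫ s in (0:ℝ)..((j:ℝ)+1), g s)⁻¹
            * ∑ i ∈ Finset.range (j+1), singVal T i) := by
        have e1 : (∫ s in (0:ℝ)..((j:ℝ)+1), g s) * singVal T j
            ≤ (CK * (((j:ℝ)+1) * g j)) * singVal T j :=
          mul_le_mul_of_nonneg_right h2 hμj
        have e2 : (CK * g j) * (((j:ℝ)+1) * singVal T j)
            ≤ (CK * g j) * ∑ i ∈ Finset.range (j+1), singVal T i :=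
          mul_le_mul_of_nonneg_left h1 (mul_nonneg hCK.le (hgj j).le)
        have key : (∫ s in (0:ℝ)..((j:ℝ)+1), g s) * singVal T j
            ≤ (CK * g j) * ∑ i ∈ Finset.range (j+1), singVal T i := by nlinarith
        rw [inv_mul_le_iff₀ (hgj j)]
        rw [show g j * (CK * ((∫ s in (0:ℝ)..((j:ℝ)+1), g s)⁻¹
            * ∑ i ∈ Finset.range (j+1), singVal T i))
          = ((CK * g j) * ∑ i ∈ Finset.range (j+1), singVal T i)
            * (∫ s in (0:ℝ)..((j:ℝ)+1), g s)⁻¹ from by ring]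
        rw [← div_eq_mul_inv, le_div_iff₀ hI]
        linarith [key]
      calc ENNReal.ofReal ((g j)⁻¹ * singVal T j)
          ≤ ENNReal.ofReal (CK * ((∫ s in (0:ℝ)..((j:ℝ)+1), g s)⁻¹
              * ∑ i ∈ Finset.range (j+1), singVal T i)) :=
            ENNReal.ofReal_le_ofReal hscal
        _ = ENNReal.ofReal CK * ENNReal.ofReal ((∫ s in (0:ℝ)..((j:ℝ)+1), g s)⁻¹
              * ∑ i ∈ Finset.range (j+1), singVal T i) := ENNReal.ofReal_mul hCK.le
        _ ≤ (CK.toNNReal : ℝ≥0∞) * Mnorm g T := by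
            rw [ENNReal.ofReal]
            exact mul_le_mul_right (le_iSup (fun N : ℕ => ENNReal.ofReal
              ((∫ s in (0:ℝ)..((N:ℝ)+1), g s)⁻¹
                * ∑ i ∈ Finset.range (N+1), singVal T i)) j) _
end

section
/- Let g be a continuous RV_ρ-function with ρ < 0, r = (|ρ|+1)^{-1}. For selfadjoint compact operators S, T with μ_j = O(g(j)), define Λ̄±(T) = limsup_j g(j)^{-1} λ_j^±(T) and Λ̲±(T) = liminf_j g(j)^{-1} λ_j^±(T), where λ_j^±(T) = μ_j(T^±). Then |Λ̄±(T)^r − Λ̄±(S)^r| ≤ ‖Ṫ − Ṡ‖^r and |Λ̲±(T)^r − Λ̲±(S)^r| ≤ ‖Ṫ − Ṡ‖^r, where ‖Ṫ − Ṡ‖ = limsup_j g(j)^{-1} μ_j(T − S). -/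
set_option maxHeartbeats 2000000
set_option synthInstance.maxHeartbeats 1000000


open Filter Topology

namespace BSaux


variable {u v p x y : ℕ → ℝ}

lemma eps_le {F : ℝ → ℝ} {a L : ℝ} (hF : Tendsto F (𝓝[>] (0:ℝ)) (𝓝 L))
    (h : ∀ᶠ ε in 𝓝[>] (0:ℝ), a ≤ F ε) : a ≤ L :=
  ge_of_tendsto hF h

lemma eps_le' {F : ℝ → ℝ} {a L : ℝ} (hF : Tendsto F (𝓝[>] (0:ℝ)) (𝓝 L))
    (h : ∀ ε, 0 < ε → a ≤ F ε) : a ≤ L :=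
  eps_le hF (eventually_nhdsWithin_of_forall fun ε hε => h ε hε)

lemma limsup_nonneg (h0 : ∀ n, 0 ≤ u n) (hb : IsBoundedUnder (· ≤ ·) atTop u) :
    0 ≤ limsup u atTop :=
  le_limsup_of_frequently_le (Frequently.of_forall h0) hb

lemma liminf_nonneg (h0 : ∀ n, 0 ≤ u n) (hb : IsBoundedUnder (· ≤ ·) atTop u) :
    0 ≤ liminf u atTop :=
  le_liminf_of_le hb.isCoboundedUnder_ge (Eventually.of_forall h0)

lemma bdd_of_nonneg (h0 : ∀ n, 0 ≤ u n) : IsBoundedUnder (· ≥ ·) atTop u :=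
  isBoundedUnder_of ⟨0, h0⟩

lemma cobdd_of_nonneg (h0 : ∀ n, 0 ≤ u n) : IsCoboundedUnder (· ≤ ·) atTop u :=
  isCoboundedUnder_le_of_eventually_le atTop (Eventually.of_forall h0)

lemma limsup_mul_le {P : ℝ} (hp0 : ∀ n, 0 ≤ p n) (hpb : IsBoundedUnder (· ≤ ·) atTop p)
    (hx0 : ∀ n, 0 ≤ x n) (hxb : IsBoundedUnder (· ≤ ·) atTop x)
    (hP : limsup p atTop ≤ P) :
    limsup (fun n => p n * x n) atTop ≤ P * limsup x atTop := by
  set X := limsup x atTop with hX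
  have hX0 : 0 ≤ X := limsup_nonneg hx0 hxb
  have hP0 : 0 ≤ P := le_trans (limsup_nonneg hp0 hpb) hP
  have key : ∀ ε, 0 < ε → limsup (fun n => p n * x n) atTop ≤ (P + ε) * (X + ε) := by
    intro ε hε
    have h1 : ∀ᶠ n in atTop, p n < P + ε :=
      eventually_lt_of_limsup_lt (by linarith) hpb
    have h2 : ∀ᶠ n in atTop, x n < X + ε :=
      eventually_lt_of_limsup_lt (by linarith) hxb
    refine limsup_le_of_le (cobdd_of_nonneg fun n => mul_nonneg (hp0 n) (hx0 n)) ?_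
    filter_upwards [h1, h2] with n h1 h2
    exact mul_le_mul h1.le h2.le (hx0 n) (by linarith)
  have cont : Tendsto (fun ε : ℝ => (P + ε) * (X + ε)) (𝓝[>] (0:ℝ)) (𝓝 (P * X)) := by
    have : Tendsto (fun ε : ℝ => (P + ε) * (X + ε)) (𝓝 (0:ℝ)) (𝓝 ((P + 0) * (X + 0))) := by
      exact ((tendsto_const_nhds.add tendsto_id).mul (tendsto_const_nhds.add tendsto_id))
    simpa using this.mono_left nhdsWithin_le_nhds
  exact eps_le' cont key

lemma liminf_mul_le {P : ℝ} (hp0 : ∀ n, 0 ≤ p n) (hpb : IsBoundedUnder (· ≤ ·) atTop p)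
    (hx0 : ∀ n, 0 ≤ x n) (hxb : IsBoundedUnder (· ≤ ·) atTop x)
    (hP : limsup p atTop ≤ P) :
    liminf (fun n => p n * x n) atTop ≤ P * liminf x atTop := by
  set X := liminf x atTop with hX
  have hX0 : 0 ≤ X := liminf_nonneg hx0 hxb
  have hP0 : 0 ≤ P := le_trans (limsup_nonneg hp0 hpb) hP
  have key : ∀ ε, 0 < ε → liminf (fun n => p n * x n) atTop ≤ (P + ε) * (X + ε) := by
    intro ε hε
    have h1 : ∀ᶠ n in atTop, p n < P + ε :=
      eventually_lt_of_limsup_lt (by linarith) hpb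
    have h2 : ∃ᶠ n in atTop, x n < X + ε :=
      frequently_lt_of_liminf_lt hxb.isCoboundedUnder_ge (by linarith)
    refine liminf_le_of_frequently_le ?_ (bdd_of_nonneg fun n => mul_nonneg (hp0 n) (hx0 n))
    refine (h2.and_eventually h1).mono ?_
    rintro n ⟨h2, h1⟩
    exact mul_le_mul h1.le h2.le (hx0 n) (by linarith)
  have cont : Tendsto (fun ε : ℝ => (P + ε) * (X + ε)) (𝓝[>] (0:ℝ)) (𝓝 (P * X)) := by
    have : Tendsto (fun ε : ℝ => (P + ε) * (X + ε)) (𝓝 (0:ℝ)) (𝓝 ((P + 0) * (X + 0))) :=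
      ((tendsto_const_nhds.add tendsto_id).mul (tendsto_const_nhds.add tendsto_id))
    simpa using this.mono_left nhdsWithin_le_nhds
  exact eps_le' cont key

lemma limsup_add_le' (hx0 : ∀ n, 0 ≤ x n) (hxb : IsBoundedUnder (· ≤ ·) atTop x)
    (hy0 : ∀ n, 0 ≤ y n) (hyb : IsBoundedUnder (· ≤ ·) atTop y) :
    limsup (fun n => x n + y n) atTop ≤ limsup x atTop + limsup y atTop := by
  have key : ∀ ε, 0 < ε →
      limsup (fun n => x n + y n) atTop ≤ (limsup x atTop + limsup y atTop) + ε := by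
    intro ε hε
    have h1 : ∀ᶠ n in atTop, x n < limsup x atTop + ε / 2 :=
      eventually_lt_of_limsup_lt (by linarith) hxb
    have h2 : ∀ᶠ n in atTop, y n < limsup y atTop + ε / 2 :=
      eventually_lt_of_limsup_lt (by linarith) hyb
    refine limsup_le_of_le (cobdd_of_nonneg fun n => add_nonneg (hx0 n) (hy0 n)) ?_
    filter_upwards [h1, h2] with n h1 h2; linarith
  have cont : Tendsto (fun ε : ℝ => (limsup x atTop + limsup y atTop) + ε)
      (𝓝[>] (0:ℝ)) (𝓝 (limsup x atTop + limsup y atTop)) := by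
    have : Tendsto (fun ε : ℝ => (limsup x atTop + limsup y atTop) + ε) (𝓝 (0:ℝ))
        (𝓝 ((limsup x atTop + limsup y atTop) + 0)) := tendsto_const_nhds.add tendsto_id
    simpa using this.mono_left nhdsWithin_le_nhds
  exact eps_le' cont key

lemma liminf_add_le' (hx0 : ∀ n, 0 ≤ x n) (hxb : IsBoundedUnder (· ≤ ·) atTop x)
    (hy0 : ∀ n, 0 ≤ y n) (hyb : IsBoundedUnder (· ≤ ·) atTop y) :
    liminf (fun n => x n + y n) atTop ≤ liminf x atTop + limsup y atTop := by
  have key : ∀ ε, 0 < ε →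
      liminf (fun n => x n + y n) atTop ≤ (liminf x atTop + limsup y atTop) + ε := by
    intro ε hε
    have h1 : ∃ᶠ n in atTop, x n < liminf x atTop + ε / 2 :=
      frequently_lt_of_liminf_lt hxb.isCoboundedUnder_ge (by linarith)
    have h2 : ∀ᶠ n in atTop, y n < limsup y atTop + ε / 2 :=
      eventually_lt_of_limsup_lt (by linarith) hyb
    refine liminf_le_of_frequently_le ?_ (bdd_of_nonneg fun n => add_nonneg (hx0 n) (hy0 n))
    refine (h1.and_eventually h2).mono ?_
    rintro n ⟨h1, h2⟩; linarith
  have cont : Tendsto (fun ε : ℝ => (liminf x atTop + limsup y atTop) + ε)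
      (𝓝[>] (0:ℝ)) (𝓝 (liminf x atTop + limsup y atTop)) := by
    have : Tendsto (fun ε : ℝ => (liminf x atTop + limsup y atTop) + ε) (𝓝 (0:ℝ))
        (𝓝 ((liminf x atTop + limsup y atTop) + 0)) := tendsto_const_nhds.add tendsto_id
    simpa using this.mono_left nhdsWithin_le_nhds
  exact eps_le' cont key

lemma bounded_comp {φ : ℕ → ℕ} (hφ : Tendsto φ atTop atTop)
    (hxb : IsBoundedUnder (· ≤ ·) atTop x) :
    IsBoundedUnder (· ≤ ·) atTop (fun m => x (φ m)) := by
  obtain ⟨C, hC⟩ := hxb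
  exact isBoundedUnder_of_eventually_le (a := C) (hφ.eventually (eventually_map.1 hC))

lemma limsup_comp_le {φ : ℕ → ℕ} (hφ : Tendsto φ atTop atTop) (hx0 : ∀ n, 0 ≤ x n)
    (hxb : IsBoundedUnder (· ≤ ·) atTop x) :
    limsup (fun m => x (φ m)) atTop ≤ limsup x atTop := by
  have key : ∀ ε, 0 < ε → limsup (fun m => x (φ m)) atTop ≤ limsup x atTop + ε := by
    intro ε hε
    have h1 : ∀ᶠ n in atTop, x n < limsup x atTop + ε :=
      eventually_lt_of_limsup_lt (by linarith) hxb
    refine limsup_le_of_le (cobdd_of_nonneg fun n => hx0 _) ?_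
    exact (hφ.eventually h1).mono fun n h => h.le
  have cont : Tendsto (fun ε : ℝ => limsup x atTop + ε) (𝓝[>] (0:ℝ)) (𝓝 (limsup x atTop)) := by
    have : Tendsto (fun ε : ℝ => limsup x atTop + ε) (𝓝 (0:ℝ)) (𝓝 (limsup x atTop + 0)) :=
      tendsto_const_nhds.add tendsto_id
    simpa using this.mono_left nhdsWithin_le_nhds
  exact eps_le' cont key

lemma atTop_le_map (φ : ℕ → ℕ) (hφ : Tendsto φ atTop atTop)
    (hstep : ∀ m, φ (m + 1) ≤ φ m + 1) : atTop ≤ map φ atTop := by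
  intro s hs
  rw [mem_map, mem_atTop_sets] at hs
  obtain ⟨M, hM⟩ := hs
  rw [mem_atTop_sets]
  refine ⟨φ M, fun j hj => ?_⟩
  -- find m ≥ M with φ m = j
  suffices h : ∃ m, M ≤ m ∧ φ m = j by
    obtain ⟨m, hm, rfl⟩ := h; exact hM m hm
  induction j with
  | zero => exact ⟨M, le_rfl, Nat.le_zero.mp hj⟩
  | succ j ih =>
    rcases Nat.lt_or_ge j (φ M) with hlt | hge
    · exact ⟨M, le_rfl, by omega⟩
    · obtain ⟨m, hm, hφm⟩ := ih hge
      have hex : ∃ t, j + 1 ≤ φ (m + t) := by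
        obtain ⟨N, hN⟩ := (tendsto_atTop.1 hφ (j + 1)).exists_forall_of_atTop
        exact ⟨N, hN (m + N) (by omega)⟩
      set t₀ := Nat.find hex with ht₀def
      have ht₀ : j + 1 ≤ φ (m + t₀) := Nat.find_spec hex
      have ht₀pos : t₀ ≠ 0 := by
        intro h0
        rw [h0] at ht₀; simp only [Nat.add_zero] at ht₀; omega
      have hprev : ¬ (j + 1 ≤ φ (m + (t₀ - 1))) := Nat.find_min hex (by omega)
      have hstep' : φ (m + t₀) ≤ φ (m + (t₀ - 1)) + 1 := by
        have := hstep (m + (t₀ - 1))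
        rwa [show m + (t₀ - 1) + 1 = m + t₀ by omega] at this
      exact ⟨m + t₀, by omega, by omega⟩

lemma liminf_comp_le {φ : ℕ → ℕ} (hφ : Tendsto φ atTop atTop)
    (hstep : ∀ m, φ (m + 1) ≤ φ m + 1)
    (hx0 : ∀ n, 0 ≤ x n) (hxb : IsBoundedUnder (· ≤ ·) atTop x) :
    liminf (fun m => x (φ m)) atTop ≤ liminf x atTop := by
  have hle : atTop ≤ map φ atTop := atTop_le_map φ hφ hstep
  have h1 : liminf (fun m => x (φ m)) atTop = liminf x (map φ atTop) := by
    rw [Filter.liminf, Filter.liminf, Filter.map_map]; rfl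
  rw [h1]
  exact liminf_le_liminf_of_le hle (isBoundedUnder_of ⟨0, fun n => hx0 n⟩)
    hxb.isCoboundedUnder_ge


lemma eps_le_Ioo {F : ℝ → ℝ} {a L c : ℝ} (hc : 0 < c) (hF : Tendsto F (𝓝[>] (0:ℝ)) (𝓝 L))
    (h : ∀ ε, 0 < ε → ε < c → a ≤ F ε) : a ≤ L := by
  refine eps_le hF ?_
  filter_upwards [Ioo_mem_nhdsGT_of_mem (Set.left_mem_Ico.2 hc)] with ε hε
  exact h ε hε.1 hε.2

lemma bdd_mul {p x : ℕ → ℝ} (hp0 : ∀ n, 0 ≤ p n) (hx0 : ∀ n, 0 ≤ x n)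
    (hpb : IsBoundedUnder (· ≤ ·) atTop p) (hxb : IsBoundedUnder (· ≤ ·) atTop x) :
    IsBoundedUnder (· ≤ ·) atTop (fun n => p n * x n) := by
  obtain ⟨C1, hC1⟩ := hpb
  obtain ⟨C2, hC2⟩ := hxb
  refine isBoundedUnder_of_eventually_le (a := max C1 0 * max C2 0) ?_
  filter_upwards [eventually_map.1 hC1, eventually_map.1 hC2] with n h1 h2
  exact mul_le_mul (h1.trans (le_max_left _ _)) (h2.trans (le_max_left _ _)) (hx0 n)
    (le_max_right _ _)

lemma bdd_add {x y : ℕ → ℝ} (hxb : IsBoundedUnder (· ≤ ·) atTop x)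
    (hyb : IsBoundedUnder (· ≤ ·) atTop y) :
    IsBoundedUnder (· ≤ ·) atTop (fun n => x n + y n) := by
  obtain ⟨C1, hC1⟩ := hxb
  obtain ⟨C2, hC2⟩ := hyb
  refine isBoundedUnder_of_eventually_le (a := C1 + C2) ?_
  filter_upwards [eventually_map.1 hC1, eventually_map.1 hC2] with n h1 h2
  exact add_le_add h1 h2

section core

variable {ρ : ℝ} {g : ℝ → ℝ}

lemma ratio_limsup_le (hpos : ∀ t ∈ Set.Ici (0:ℝ), 0 < g t)
    (hdec : ∃ b ≥ (0:ℝ), AntitoneOn g (Set.Ici b))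
    (hrv : ∀ l : ℝ, 0 < l → Tendsto (fun t => g (l * t) / g t) atTop (𝓝 (l ^ ρ)))
    {θ : ℝ} (hθ0 : 0 < θ) (φ : ℕ → ℕ)
    (hφ : ∀ θ₂, 0 < θ₂ → θ₂ < θ → ∀ᶠ m : ℕ in atTop, θ₂ * m ≤ (φ m : ℝ)) :
    limsup (fun m : ℕ => g (φ m) / g m) atTop ≤ θ ^ ρ := by
  obtain ⟨b, hb0, hanti⟩ := hdec
  have key : ∀ θ₂, 0 < θ₂ → θ₂ < θ → limsup (fun m : ℕ => g (φ m) / g m) atTop ≤ θ₂ ^ ρ := by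
    intro θ₂ h2 h2'
    have hb' : ∀ᶠ m : ℕ in atTop, b ≤ θ₂ * m := by
      have ht : Tendsto (fun m : ℕ => θ₂ * (m:ℝ)) atTop atTop :=
        Tendsto.const_mul_atTop h2 tendsto_natCast_atTop_atTop
      exact ht.eventually_ge_atTop b
    have hev : ∀ᶠ m : ℕ in atTop, g (φ m) / g m ≤ g (θ₂ * m) / g m := by
      filter_upwards [hb', hφ θ₂ h2 h2'] with m h1 hle
      have hgm : 0 < g m := hpos _ (Set.mem_Ici.2 (Nat.cast_nonneg m))
      have hmono : g (φ m) ≤ g (θ₂ * m) :=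
        hanti (Set.mem_Ici.2 h1) (Set.mem_Ici.2 (h1.trans hle)) hle
      exact div_le_div_of_nonneg_right hmono hgm.le
    have hconv : Tendsto (fun m : ℕ => g (θ₂ * m) / g m) atTop (𝓝 (θ₂ ^ ρ)) :=
      (hrv θ₂ h2).comp tendsto_natCast_atTop_atTop
    calc limsup (fun m : ℕ => g (φ m) / g m) atTop
        ≤ limsup (fun m : ℕ => g (θ₂ * m) / g m) atTop := by
          refine limsup_le_limsup hev ?_ hconv.isBoundedUnder_le
          exact cobdd_of_nonneg fun m => div_nonneg
            (hpos _ (Set.mem_Ici.2 (Nat.cast_nonneg _))).le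
            (hpos _ (Set.mem_Ici.2 (Nat.cast_nonneg _))).le
      _ = θ₂ ^ ρ := hconv.limsup_eq
  refine eps_le_Ioo (c := θ) hθ0 (F := fun ε => (θ - ε) ^ ρ) ?_ ?_
  · have h1 : Tendsto (fun ε : ℝ => θ - ε) (𝓝[>] (0:ℝ)) (𝓝 θ) := by
      have : Tendsto (fun ε : ℝ => θ - ε) (𝓝 (0:ℝ)) (𝓝 (θ - 0)) :=
        tendsto_const_nhds.sub tendsto_id
      simpa using this.mono_left nhdsWithin_le_nhds
    exact ((Real.continuousAt_rpow_const θ ρ (Or.inl hθ0.ne')).tendsto).comp h1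
  · intro ε hε hεθ
    exact key (θ - ε) (by linarith) (by linarith)

lemma ratio_bounded (hpos : ∀ t ∈ Set.Ici (0:ℝ), 0 < g t)
    (hdec : ∃ b ≥ (0:ℝ), AntitoneOn g (Set.Ici b))
    (hrv : ∀ l : ℝ, 0 < l → Tendsto (fun t => g (l * t) / g t) atTop (𝓝 (l ^ ρ)))
    {θ : ℝ} (hθ0 : 0 < θ) (φ : ℕ → ℕ)
    (hφ : ∀ θ₂, 0 < θ₂ → θ₂ < θ → ∀ᶠ m : ℕ in atTop, θ₂ * m ≤ (φ m : ℝ)) :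
    IsBoundedUnder (· ≤ ·) atTop (fun m : ℕ => g (φ m) / g m) := by
  obtain ⟨b, hb0, hanti⟩ := hdec
  have h2 : 0 < θ / 2 := by linarith
  have hb' : ∀ᶠ m : ℕ in atTop, b ≤ (θ / 2) * m := by
    have ht : Tendsto (fun m : ℕ => (θ / 2) * (m:ℝ)) atTop atTop :=
      Tendsto.const_mul_atTop h2 tendsto_natCast_atTop_atTop
    exact ht.eventually_ge_atTop b
  have hev : ∀ᶠ m : ℕ in atTop, g (φ m) / g m ≤ g ((θ / 2) * m) / g m := by
    filter_upwards [hb', hφ (θ / 2) h2 (by linarith)] with m h1 hle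
    have hgm : 0 < g m := hpos _ (Set.mem_Ici.2 (Nat.cast_nonneg m))
    exact div_le_div_of_nonneg_right
      (hanti (Set.mem_Ici.2 h1) (Set.mem_Ici.2 (h1.trans hle)) hle) hgm.le
  have hconv : Tendsto (fun m : ℕ => g ((θ / 2) * m) / g m) atTop (𝓝 ((θ / 2) ^ ρ)) :=
    (hrv _ h2).comp tendsto_natCast_atTop_atTop
  obtain ⟨C, hC⟩ := hconv.isBoundedUnder_le
  refine isBoundedUnder_of_eventually_le (a := C) ?_
  filter_upwards [hev, eventually_map.1 hC] with m h1 h2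
  exact h1.trans h2

lemma core (hρ : ρ < 0) (hpos : ∀ t ∈ Set.Ici (0:ℝ), 0 < g t)
    (hdec : ∃ b ≥ (0:ℝ), AntitoneOn g (Set.Ici b))
    (hrv : ∀ l : ℝ, 0 < l → Tendsto (fun t => g (l * t) / g t) atTop (𝓝 (l ^ ρ)))
    (u v w : ℕ → ℝ)
    (hu0 : ∀ j, 0 ≤ u j) (hv0 : ∀ j, 0 ≤ v j) (hw0 : ∀ j, 0 ≤ w j)
    (hweyl : ∀ n k, u (n + k) ≤ v n + w k)
    (hvb : IsBoundedUnder (· ≤ ·) atTop (fun j : ℕ => (g j)⁻¹ * v j))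
    (hwb : IsBoundedUnder (· ≤ ·) atTop (fun j : ℕ => (g j)⁻¹ * w j)) :
    IsBoundedUnder (· ≤ ·) atTop (fun j : ℕ => (g j)⁻¹ * u j) ∧
    (∀ θ ∈ Set.Ioo (0:ℝ) 1,
      limsup (fun j : ℕ => (g j)⁻¹ * u j) atTop ≤
        θ ^ ρ * limsup (fun j : ℕ => (g j)⁻¹ * v j) atTop +
        (1 - θ) ^ ρ * limsup (fun j : ℕ => (g j)⁻¹ * w j) atTop) ∧
    (∀ θ ∈ Set.Ioo (0:ℝ) 1,
      liminf (fun j : ℕ => (g j)⁻¹ * u j) atTop ≤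
        θ ^ ρ * liminf (fun j : ℕ => (g j)⁻¹ * v j) atTop +
        (1 - θ) ^ ρ * limsup (fun j : ℕ => (g j)⁻¹ * w j) atTop) := by
  set U := fun j : ℕ => (g j)⁻¹ * u j with hU
  set V := fun j : ℕ => (g j)⁻¹ * v j with hV
  set W := fun j : ℕ => (g j)⁻¹ * w j with hW
  have hgpos : ∀ j : ℕ, 0 < g j := fun j => hpos _ (Set.mem_Ici.2 (Nat.cast_nonneg j))
  have hU0 : ∀ j, 0 ≤ U j := fun j => mul_nonneg (inv_nonneg.2 (hgpos j).le) (hu0 j)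
  have hV0 : ∀ j, 0 ≤ V j := fun j => mul_nonneg (inv_nonneg.2 (hgpos j).le) (hv0 j)
  have hW0 : ∀ j, 0 ≤ W j := fun j => mul_nonneg (inv_nonneg.2 (hgpos j).le) (hw0 j)
  -- main per-θ construction
  have main : ∀ θ ∈ Set.Ioo (0:ℝ) 1,
      (IsBoundedUnder (· ≤ ·) atTop U) ∧
      (limsup U atTop ≤ θ ^ ρ * limsup V atTop + (1 - θ) ^ ρ * limsup W atTop) ∧
      (liminf U atTop ≤ θ ^ ρ * liminf V atTop + (1 - θ) ^ ρ * limsup W atTop) := by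
    rintro θ ⟨hθ0, hθ1⟩
    set n := fun m : ℕ => ⌈θ * m⌉₊ with hn
    have hnlem : ∀ m, n m ≤ m := fun m => Nat.ceil_le.2 (by nlinarith [(Nat.cast_nonneg m : (0:ℝ) ≤ m)])
    set k := fun m : ℕ => m - n m with hk
    have hnk : ∀ m, n m + k m = m := fun m => Nat.add_sub_cancel' (hnlem m)
    have hkcast : ∀ m, (k m : ℝ) = (m : ℝ) - n m := by
      intro m; rw [hk]; push_cast [Nat.cast_sub (hnlem m)]; ring
    have hceil : ∀ m : ℕ, (n m : ℝ) ≤ θ * m + 1 := fun m =>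
      (Nat.ceil_lt_add_one (by positivity)).le
    have hφn : ∀ θ₂, 0 < θ₂ → θ₂ < θ → ∀ᶠ m : ℕ in atTop, θ₂ * m ≤ (n m : ℝ) := by
      intro θ₂ h2 h2'
      refine Eventually.of_forall fun m => ?_
      have h1 : θ₂ * m ≤ θ * m := by nlinarith [(Nat.cast_nonneg m : (0:ℝ) ≤ m)]
      exact h1.trans (Nat.le_ceil _)
    have hφk : ∀ θ₂, 0 < θ₂ → θ₂ < 1 - θ → ∀ᶠ m : ℕ in atTop, θ₂ * m ≤ (k m : ℝ) := by
      intro θ₂ h2 h2'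
      have ht : Tendsto (fun m : ℕ => ((1 - θ) - θ₂) * (m:ℝ)) atTop atTop :=
        Tendsto.const_mul_atTop (by linarith) tendsto_natCast_atTop_atTop
      filter_upwards [ht.eventually_ge_atTop 1] with m hm
      rw [hkcast m]
      nlinarith [hceil m]
    have hn_tend : Tendsto n atTop atTop := by
      refine tendsto_atTop.2 fun C => ?_
      have ht : Tendsto (fun m : ℕ => θ * (m:ℝ)) atTop atTop :=
        Tendsto.const_mul_atTop hθ0 tendsto_natCast_atTop_atTop
      filter_upwards [ht.eventually_ge_atTop C] with m hm
      exact_mod_cast (Nat.cast_le (α := ℝ)).1 (hm.trans (Nat.le_ceil _))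
    have hk_tend : Tendsto k atTop atTop := by
      refine tendsto_atTop.2 fun C => ?_
      have ht : Tendsto (fun m : ℕ => ((1 - θ)/2) * (m:ℝ)) atTop atTop :=
        Tendsto.const_mul_atTop (by linarith) tendsto_natCast_atTop_atTop
      filter_upwards [ht.eventually_ge_atTop C,
        hφk ((1 - θ)/2) (by linarith) (by linarith)] with m h1 h2
      exact_mod_cast (Nat.cast_le (α := ℝ)).1 (h1.trans h2)
    have hn_step : ∀ m, n (m + 1) ≤ n m + 1 := by
      intro m
      have h1 : θ * ((m : ℕ) + 1 : ℕ) ≤ θ * m + 1 := by push_cast; nlinarith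
      calc n (m + 1) ≤ ⌈θ * m + 1⌉₊ := Nat.ceil_le_ceil (by push_cast; nlinarith)
        _ = n m + 1 := by rw [Nat.ceil_add_one (by positivity)]
    set p := fun m : ℕ => g (n m) / g m with hp
    set q := fun m : ℕ => g (k m) / g m with hq
    have hp0 : ∀ m, 0 ≤ p m := fun m => div_nonneg (hgpos _).le (hgpos _).le
    have hq0 : ∀ m, 0 ≤ q m := fun m => div_nonneg (hgpos _).le (hgpos _).le
    have hp_ls : limsup p atTop ≤ θ ^ ρ := ratio_limsup_le hpos hdec hrv hθ0 n hφn
    have hq_ls : limsup q atTop ≤ (1 - θ) ^ ρ :=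
      ratio_limsup_le hpos hdec hrv (by linarith) k hφk
    have hp_b : IsBoundedUnder (· ≤ ·) atTop p := ratio_bounded hpos hdec hrv hθ0 n hφn
    have hq_b : IsBoundedUnder (· ≤ ·) atTop q :=
      ratio_bounded hpos hdec hrv (by linarith : (0:ℝ) < 1 - θ) k hφk
    have hVn0 : ∀ m, 0 ≤ V (n m) := fun m => hV0 _
    have hWk0 : ∀ m, 0 ≤ W (k m) := fun m => hW0 _
    have hVn_b : IsBoundedUnder (· ≤ ·) atTop (fun m => V (n m)) := bounded_comp hn_tend hvb
    have hWk_b : IsBoundedUnder (· ≤ ·) atTop (fun m => W (k m)) := bounded_comp hk_tend hwb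
    have hpoint : ∀ m, U m ≤ p m * V (n m) + q m * W (k m) := by
      intro m
      have h1 : u m ≤ v (n m) + w (k m) := by
        have := hweyl (n m) (k m); rwa [hnk m] at this
      have h2 : U m ≤ (g m)⁻¹ * (v (n m) + w (k m)) :=
        mul_le_mul_of_nonneg_left h1 (inv_nonneg.2 (hgpos m).le)
      have key : ∀ (a : ℕ) (t : ℝ), (g a / g m) * ((g a)⁻¹ * t) = (g m)⁻¹ * t := by
        intro a t
        have ha : g (a : ℕ) ≠ 0 := (hgpos a).ne'
        rw [div_eq_mul_inv]
        calc g (a:ℕ) * (g (m:ℕ))⁻¹ * ((g (a:ℕ))⁻¹ * t)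
            = (g (a:ℕ) * (g (a:ℕ))⁻¹) * ((g (m:ℕ))⁻¹ * t) := by ring
          _ = (g (m:ℕ))⁻¹ * t := by rw [mul_inv_cancel₀ ha, one_mul]
      have h3 : (g m)⁻¹ * (v (n m) + w (k m)) = p m * V (n m) + q m * W (k m) := by
        rw [hp, hq, hV, hW, mul_add, ← key (n m) (v (n m)), ← key (k m) (w (k m))]
      rw [h3] at h2; exact h2
    have hsum_b : IsBoundedUnder (· ≤ ·) atTop
        (fun m => p m * V (n m) + q m * W (k m)) :=
      bdd_add (bdd_mul hp0 hVn0 hp_b hVn_b) (bdd_mul hq0 hWk0 hq_b hWk_b)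
    have hU_b : IsBoundedUnder (· ≤ ·) atTop U := by
      obtain ⟨C, hC⟩ := hsum_b
      refine isBoundedUnder_of_eventually_le (a := C) ?_
      filter_upwards [eventually_map.1 hC] with m hm
      exact (hpoint m).trans hm
    refine ⟨hU_b, ?_, ?_⟩
    · calc limsup U atTop
          ≤ limsup (fun m => p m * V (n m) + q m * W (k m)) atTop :=
            limsup_le_limsup (Eventually.of_forall hpoint) (cobdd_of_nonneg hU0) hsum_b
        _ ≤ limsup (fun m => p m * V (n m)) atTop + limsup (fun m => q m * W (k m)) atTop :=
            limsup_add_le' (fun m => mul_nonneg (hp0 m) (hVn0 m))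
              (bdd_mul hp0 hVn0 hp_b hVn_b)
              (fun m => mul_nonneg (hq0 m) (hWk0 m)) (bdd_mul hq0 hWk0 hq_b hWk_b)
        _ ≤ θ ^ ρ * limsup (fun m => V (n m)) atTop
              + (1 - θ) ^ ρ * limsup (fun m => W (k m)) atTop :=
            add_le_add (limsup_mul_le hp0 hp_b hVn0 hVn_b hp_ls)
              (limsup_mul_le hq0 hq_b hWk0 hWk_b hq_ls)
        _ ≤ θ ^ ρ * limsup V atTop + (1 - θ) ^ ρ * limsup W atTop := by
            refine add_le_add ?_ ?_
            · exact mul_le_mul_of_nonneg_left (limsup_comp_le hn_tend hV0 hvb)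
                (Real.rpow_nonneg hθ0.le ρ)
            · exact mul_le_mul_of_nonneg_left (limsup_comp_le hk_tend hW0 hwb)
                (Real.rpow_nonneg (by linarith) ρ)
    · calc liminf U atTop
          ≤ liminf (fun m => p m * V (n m) + q m * W (k m)) atTop := by
            refine liminf_le_liminf (Eventually.of_forall hpoint) ?_ ?_
            · exact bdd_of_nonneg hU0
            · exact hsum_b.isCoboundedUnder_ge
        _ ≤ liminf (fun m => p m * V (n m)) atTop + limsup (fun m => q m * W (k m)) atTop :=
            liminf_add_le' (fun m => mul_nonneg (hp0 m) (hVn0 m))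
              (bdd_mul hp0 hVn0 hp_b hVn_b)
              (fun m => mul_nonneg (hq0 m) (hWk0 m)) (bdd_mul hq0 hWk0 hq_b hWk_b)
        _ ≤ θ ^ ρ * liminf (fun m => V (n m)) atTop
              + (1 - θ) ^ ρ * limsup (fun m => W (k m)) atTop :=
            add_le_add (liminf_mul_le hp0 hp_b hVn0 hVn_b hp_ls)
              (limsup_mul_le hq0 hq_b hWk0 hWk_b hq_ls)
        _ ≤ θ ^ ρ * liminf V atTop + (1 - θ) ^ ρ * limsup W atTop := by
            refine add_le_add ?_ ?_
            · exact mul_le_mul_of_nonneg_left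
                (liminf_comp_le hn_tend hn_step hV0 hvb) (Real.rpow_nonneg hθ0.le ρ)
            · exact mul_le_mul_of_nonneg_left (limsup_comp_le hk_tend hW0 hwb)
                (Real.rpow_nonneg (by linarith) ρ)
  have hhalf : (1/2 : ℝ) ∈ Set.Ioo (0:ℝ) 1 := by norm_num
  exact ⟨(main _ hhalf).1, fun θ hθ => (main θ hθ).2.1, fun θ hθ => (main θ hθ).2.2⟩

lemma opt {ρ A B D : ℝ} (hρ : ρ < 0) (hA : 0 ≤ A) (hB : 0 ≤ B) (hD : 0 ≤ D)
    (h : ∀ θ ∈ Set.Ioo (0:ℝ) 1, A ≤ θ ^ ρ * B + (1 - θ) ^ ρ * D) :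
    A ^ ((|ρ| + 1)⁻¹) ≤ B ^ ((|ρ| + 1)⁻¹) + D ^ ((|ρ| + 1)⁻¹) := by
  have habs : |ρ| = -ρ := abs_of_neg hρ
  set r := (|ρ| + 1)⁻¹ with hrdef
  have hr0 : 0 < r := by rw [hrdef]; positivity
  have hr1 : r * (1 - ρ) = 1 := by
    have h1 : |ρ| + 1 = 1 - ρ := by rw [habs]; ring
    rw [hrdef, h1, inv_mul_cancel₀ (by linarith : (1:ℝ) - ρ ≠ 0)]
  have hone : Tendsto (fun ε : ℝ => (1 - ε) ^ ρ) (𝓝[>] (0:ℝ)) (𝓝 1) := by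
    have h1 : Tendsto (fun ε : ℝ => 1 - ε) (𝓝[>] (0:ℝ)) (𝓝 1) := by
      have : Tendsto (fun ε : ℝ => 1 - ε) (𝓝 (0:ℝ)) (𝓝 (1 - 0)) :=
        tendsto_const_nhds.sub tendsto_id
      simpa using this.mono_left nhdsWithin_le_nhds
    have h2 := (Real.continuousAt_rpow_const 1 ρ (Or.inl one_ne_zero)).tendsto.comp h1
    simpa [Real.one_rpow, Function.comp_def] using h2
  rcases eq_or_lt_of_le hB with hB0 | hBpos
  · -- B = 0
    have hAD : A ≤ D := by
      refine eps_le_Ioo (c := (1:ℝ)) one_pos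
        (F := fun ε => (1 - ε) ^ ρ * D) (by simpa using hone.mul_const D) ?_
      intro ε hε0 hε1
      have := h ε ⟨hε0, hε1⟩
      rw [← hB0] at this
      simpa using this
    rw [← hB0, Real.zero_rpow hr0.ne']
    have := Real.rpow_le_rpow hA hAD hr0.le
    linarith
  rcases eq_or_lt_of_le hD with hD0 | hDpos
  · -- D = 0
    have hAB : A ≤ B := by
      refine eps_le_Ioo (c := (1:ℝ)) one_pos
        (F := fun ε => (1 - ε) ^ ρ * B) (by simpa using hone.mul_const B) ?_
      intro ε hε0 hε1
      have := h (1 - ε) ⟨by linarith, by linarith⟩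
      rw [← hD0] at this
      have e : 1 - (1 - ε) = ε := by ring
      rw [e] at this
      simpa using this
    rw [← hD0, Real.zero_rpow hr0.ne']
    have := Real.rpow_le_rpow hA hAB hr0.le
    linarith
  · -- main case
    set Sg := B ^ r + D ^ r with hSg
    have hBr : 0 < B ^ r := Real.rpow_pos_of_pos hBpos r
    have hDr : 0 < D ^ r := Real.rpow_pos_of_pos hDpos r
    have hSgpos : 0 < Sg := by rw [hSg]; linarith
    have hθmem : B ^ r / Sg ∈ Set.Ioo (0:ℝ) 1 :=
      ⟨div_pos hBr hSgpos, (div_lt_one hSgpos).2 (by rw [hSg]; linarith)⟩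
    have h1θ : 1 - B ^ r / Sg = D ^ r / Sg := by
      field_simp [hSg]
      rw [hSg]; ring
    have hmain := h _ hθmem
    rw [h1θ] at hmain
    have hrρ : r * ρ + 1 = r := by nlinarith [hr1]
    have e1 : (B ^ r / Sg) ^ ρ * B = B ^ r * Sg ^ (-ρ) := by
      rw [Real.div_rpow hBr.le hSgpos.le, div_eq_mul_inv, ← Real.rpow_neg hSgpos.le,
        ← Real.rpow_mul hB, mul_assoc, mul_comm (Sg ^ (-ρ)) B, ← mul_assoc]
      congr 1
      rw [← Real.rpow_add_one hBpos.ne' (r * ρ), hrρ]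
    have e2 : (D ^ r / Sg) ^ ρ * D = D ^ r * Sg ^ (-ρ) := by
      rw [Real.div_rpow hDr.le hSgpos.le, div_eq_mul_inv, ← Real.rpow_neg hSgpos.le,
        ← Real.rpow_mul hD, mul_assoc, mul_comm (Sg ^ (-ρ)) D, ← mul_assoc]
      congr 1
      rw [← Real.rpow_add_one hDpos.ne' (r * ρ), hrρ]
    have hA' : A ≤ Sg ^ (1 - ρ) := by
      calc A ≤ B ^ r * Sg ^ (-ρ) + D ^ r * Sg ^ (-ρ) := by rw [← e1, ← e2]; exact hmain
        _ = Sg * Sg ^ (-ρ) := by rw [hSg]; ring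
        _ = Sg ^ (1:ℝ) * Sg ^ (-ρ) := by rw [Real.rpow_one]
        _ = Sg ^ (1 - ρ) := by rw [← Real.rpow_add hSgpos]; ring_nf
    calc A ^ r ≤ (Sg ^ (1 - ρ)) ^ r := Real.rpow_le_rpow hA hA' hr0.le
      _ = Sg ^ ((1 - ρ) * r) := by rw [← Real.rpow_mul hSgpos.le]
      _ = Sg := by rw [show (1 - ρ) * r = 1 by linarith [hr1], Real.rpow_one]

lemma bdd_of_le_of_O {u x : ℕ → ℝ} {g : ℝ → ℝ} (hgpos : ∀ j : ℕ, 0 < g j)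
    (h0 : ∀ j, 0 ≤ u j) (hle : ∀ j, u j ≤ x j)
    (hO : (fun j : ℕ => x j) =O[atTop] fun j : ℕ => g j) :
    IsBoundedUnder (· ≤ ·) atTop (fun j : ℕ => (g j)⁻¹ * u j) := by
  rcases Asymptotics.isBigO_iff.1 hO with ⟨C, hC⟩
  refine isBoundedUnder_of_eventually_le (a := C) ?_
  filter_upwards [hC] with j hj
  have hg := hgpos j
  have h1 : u j ≤ C * g j := by
    rw [Real.norm_eq_abs, Real.norm_eq_abs, abs_of_pos hg] at hj
    have h2 : x j ≤ |x j| := le_abs_self _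
    linarith [hle j]
  calc (g j)⁻¹ * u j ≤ (g j)⁻¹ * (C * g j) :=
        mul_le_mul_of_nonneg_left h1 (inv_nonneg.2 hg.le)
    _ = C := by field_simp

end core

end BSaux

namespace BSop

open ContinuousLinearMap


variable {H : Type*} [NormedAddCommGroup H] [InnerProductSpace ℂ H] [CompleteSpace H]

def sSet (T : H →L[ℂ] H) (j : ℕ) : Set ℝ :=
  {c : ℝ | ∃ R : H →L[ℂ] H,
    Module.rank ℂ (LinearMap.range (R : H →ₗ[ℂ] H)) ≤ (j : Cardinal) ∧ c = ‖T - R‖}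

lemma singVal_eq (T : H →L[ℂ] H) (j : ℕ) : singVal T j = sInf (sSet T j) := rfl

lemma rank_zero' (j : ℕ) :
    Module.rank ℂ (LinearMap.range ((0 : H →L[ℂ] H) : H →ₗ[ℂ] H)) ≤ (j : Cardinal) := by
  have h : LinearMap.range ((0 : H →L[ℂ] H) : H →ₗ[ℂ] H) = ⊥ := LinearMap.range_eq_bot.2 rfl
  rw [h]
  simp

lemma sSet_nonempty (T : H →L[ℂ] H) (j : ℕ) : (sSet T j).Nonempty :=
  ⟨‖T‖, 0, rank_zero' j, by simp⟩

lemma sSet_bddBelow (T : H →L[ℂ] H) (j : ℕ) : BddBelow (sSet T j) := by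
  refine ⟨0, ?_⟩
  rintro c ⟨R, -, rfl⟩
  exact norm_nonneg _

lemma singVal_nonneg (T : H →L[ℂ] H) (j : ℕ) : 0 ≤ singVal T j := by
  rw [singVal_eq]
  exact le_csInf (sSet_nonempty T j) (by rintro c ⟨R, -, rfl⟩; exact norm_nonneg _)

lemma singVal_le (T : H →L[ℂ] H) (j : ℕ) {R : H →L[ℂ] H}
    (hR : Module.rank ℂ (LinearMap.range (R : H →ₗ[ℂ] H)) ≤ (j : Cardinal)) :
    singVal T j ≤ ‖T - R‖ :=
  csInf_le (sSet_bddBelow T j) ⟨R, hR, rfl⟩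

lemma singVal_exists (T : H →L[ℂ] H) (j : ℕ) {ε : ℝ} (hε : 0 < ε) :
    ∃ R : H →L[ℂ] H, Module.rank ℂ (LinearMap.range (R : H →ₗ[ℂ] H)) ≤ (j : Cardinal) ∧
      ‖T - R‖ < singVal T j + ε := by
  have h : sInf (sSet T j) < singVal T j + ε := by
    rw [singVal_eq]; linarith
  obtain ⟨c, ⟨R, hrk, rfl⟩, hc⟩ :=
    (csInf_lt_iff (sSet_bddBelow T j) (sSet_nonempty T j)).1 h
  exact ⟨R, hrk, hc⟩

lemma singVal_neg (T : H →L[ℂ] H) (j : ℕ) : singVal (-T) j = singVal T j := by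
  have key : ∀ A : H →L[ℂ] H, sSet (-A) j ⊆ sSet A j := by
    intro A c ⟨R, hrk, hc⟩
    refine ⟨-R, ?_, ?_⟩
    · have h : LinearMap.range ((-R : H →L[ℂ] H) : H →ₗ[ℂ] H) = LinearMap.range (R : H →ₗ[ℂ] H) := by
        ext x
        simp only [LinearMap.mem_range]
        constructor
        · rintro ⟨y, rfl⟩; exact ⟨-y, by simp⟩
        · rintro ⟨y, rfl⟩; exact ⟨-y, by simp⟩
      rwa [h]
    · rw [hc, show A - -R = -(-A - R) by abel, norm_neg]
  rw [singVal_eq, singVal_eq]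
  have h1 : sSet (-T) j = sSet T j := by
    refine le_antisymm (key T) ?_
    have := key (-T); rwa [neg_neg] at this
  rw [h1]

lemma rank_add {R₁ R₂ : H →L[ℂ] H} {n k : ℕ}
    (h1 : Module.rank ℂ (LinearMap.range (R₁ : H →ₗ[ℂ] H)) ≤ (n : Cardinal))
    (h2 : Module.rank ℂ (LinearMap.range (R₂ : H →ₗ[ℂ] H)) ≤ (k : Cardinal)) :
    Module.rank ℂ (LinearMap.range ((R₁ + R₂ : H →L[ℂ] H) : H →ₗ[ℂ] H)) ≤ ((n + k : ℕ) : Cardinal) := by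
  have e : (R₁ + R₂ : H →L[ℂ] H).toLinearMap = R₁.toLinearMap + R₂.toLinearMap := rfl
  have h3 : LinearMap.rank ((R₁ + R₂ : H →L[ℂ] H).toLinearMap) ≤
      LinearMap.rank R₁.toLinearMap + LinearMap.rank R₂.toLinearMap := by
    rw [e]; exact LinearMap.rank_add_le _ _
  have e1 : LinearMap.range ((R₁ + R₂ : H →L[ℂ] H) : H →ₗ[ℂ] H) = LinearMap.range ((R₁ + R₂ : H →L[ℂ] H).toLinearMap) := rfl
  rw [e1]
  refine le_trans h3 ?_
  push_cast
  exact add_le_add h1 h2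

lemma singVal_add_le (A B : H →L[ℂ] H) (n k : ℕ) :
    singVal (A + B) (n + k) ≤ singVal A n + singVal B k := by
  refine le_of_forall_pos_le_add fun ε hε => ?_
  obtain ⟨R₁, hrk1, h1⟩ := singVal_exists A n (half_pos hε)
  obtain ⟨R₂, hrk2, h2⟩ := singVal_exists B k (half_pos hε)
  have h3 : singVal (A + B) (n + k) ≤ ‖(A + B) - (R₁ + R₂)‖ :=
    singVal_le _ _ (rank_add hrk1 hrk2)
  have h4 : ‖(A + B) - (R₁ + R₂)‖ ≤ ‖A - R₁‖ + ‖B - R₂‖ := by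
    rw [show (A + B) - (R₁ + R₂) = (A - R₁) + (B - R₂) by abel]
    exact norm_add_le _ _
  linarith

local notation "⟪" x ", " y "⟫" => @inner ℂ _ _ x y

/-- A quadratic-form variant of approximation numbers. -/
def nSet (T : H →L[ℂ] H) (j : ℕ) : Set ℝ :=
  {c : ℝ | 0 ≤ c ∧ ∃ R : H →L[ℂ] H, Module.rank ℂ (LinearMap.range (R : H →ₗ[ℂ] H)) ≤ (j : Cardinal) ∧
    ∀ x : H, RCLike.re ⟪(T - R) x, x⟫ ≤ c * ‖x‖ ^ 2}

noncomputable def nuVal (T : H →L[ℂ] H) (j : ℕ) : ℝ := sInf (nSet T j)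

lemma re_bound (A : H →L[ℂ] H) (x : H) : RCLike.re ⟪A x, x⟫ ≤ ‖A‖ * ‖x‖ ^ 2 := by
  calc RCLike.re ⟪A x, x⟫ ≤ ‖A x‖ * ‖x‖ := re_inner_le_norm _ _
    _ ≤ (‖A‖ * ‖x‖) * ‖x‖ := mul_le_mul_of_nonneg_right (A.le_opNorm x) (norm_nonneg x)
    _ = ‖A‖ * ‖x‖ ^ 2 := by ring

lemma norm_mem_nSet (T : H →L[ℂ] H) (j : ℕ) {R : H →L[ℂ] H}
    (hR : Module.rank ℂ (LinearMap.range (R : H →ₗ[ℂ] H)) ≤ (j : Cardinal)) : ‖T - R‖ ∈ nSet T j :=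
  ⟨norm_nonneg _, R, hR, fun x => re_bound (T - R) x⟩

lemma nSet_nonempty (T : H →L[ℂ] H) (j : ℕ) : (nSet T j).Nonempty :=
  ⟨‖T - 0‖, norm_mem_nSet T j (rank_zero' j)⟩

lemma nSet_bddBelow (T : H →L[ℂ] H) (j : ℕ) : BddBelow (nSet T j) :=
  ⟨0, fun _ hc => hc.1⟩

lemma nuVal_nonneg (T : H →L[ℂ] H) (j : ℕ) : 0 ≤ nuVal T j :=
  le_csInf (nSet_nonempty T j) fun _ hc => hc.1

lemma nuVal_le_singVal (T : H →L[ℂ] H) (j : ℕ) : nuVal T j ≤ singVal T j := by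
  rw [singVal_eq]
  refine le_csInf (sSet_nonempty T j) ?_
  rintro c ⟨R, hrk, rfl⟩
  exact csInf_le (nSet_bddBelow T j) (norm_mem_nSet T j hrk)

lemma nuVal_exists (T : H →L[ℂ] H) (j : ℕ) {ε : ℝ} (hε : 0 < ε) :
    ∃ c, c ∈ nSet T j ∧ c < nuVal T j + ε := by
  have h : sInf (nSet T j) < nuVal T j + ε := by rw [nuVal]; linarith
  obtain ⟨c, hc, hlt⟩ := (csInf_lt_iff (nSet_bddBelow T j) (nSet_nonempty T j)).1 h
  exact ⟨c, hc, hlt⟩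

lemma nuVal_add_le (A B : H →L[ℂ] H) (n k : ℕ) :
    nuVal (A + B) (n + k) ≤ nuVal A n + nuVal B k := by
  refine le_of_forall_pos_le_add fun ε hε => ?_
  obtain ⟨c₁, ⟨hc₁0, R₁, hrk₁, hb₁⟩, hlt₁⟩ := nuVal_exists A n (half_pos hε)
  obtain ⟨c₂, ⟨hc₂0, R₂, hrk₂, hb₂⟩, hlt₂⟩ := nuVal_exists B k (half_pos hε)
  have hmem : c₁ + c₂ ∈ nSet (A + B) (n + k) := by
    refine ⟨by linarith, R₁ + R₂, rank_add hrk₁ hrk₂, fun x => ?_⟩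
    have e : ((A + B) - (R₁ + R₂)) x = (A - R₁) x + (B - R₂) x := by
      simp only [ContinuousLinearMap.sub_apply, ContinuousLinearMap.add_apply]; abel
    rw [e, inner_add_left, map_add]
    have := hb₁ x; have := hb₂ x
    nlinarith [sq_nonneg (‖x‖)]
  have hfin : nuVal (A + B) (n + k) ≤ c₁ + c₂ :=
    csInf_le (nSet_bddBelow (A + B) (n + k)) hmem
  linarith

lemma nuVal_sub_le_singVal (X N : H →L[ℂ] H) (hN : N.IsPositive) (j : ℕ) :
    nuVal (X - N) j ≤ singVal X j := by
  rw [singVal_eq]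
  refine le_csInf (sSet_nonempty X j) ?_
  rintro c ⟨R, hrk, rfl⟩
  refine csInf_le (nSet_bddBelow _ j) ⟨norm_nonneg _, R, hrk, fun x => ?_⟩
  have e : ((X - N) - R) x = (X - R) x - N x := by
    simp only [ContinuousLinearMap.sub_apply]; abel
  rw [e, inner_sub_left, map_sub]
  have h1 := hN.re_inner_nonneg_left x
  have h2 := re_bound (X - R) x
  linarith

lemma sa_inner {A : H →L[ℂ] H} (hA : IsSelfAdjoint A) (x y : H) :
    ⟪A y, x⟫ = ⟪y, A x⟫ := by
  calc ⟪A y, x⟫ = ⟪(ContinuousLinearMap.adjoint A) y, x⟫ := by rw [hA.adjoint_eq]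
    _ = ⟪y, A x⟫ := ContinuousLinearMap.adjoint_inner_left A x y

/-- Key operator-theoretic step: the approximation numbers of the positive part are
bounded by the quadratic-form approximation numbers of the whole operator. -/
lemma singVal_posPart_le_nuVal (T Tp Tn : H →L[ℂ] H)
    (hTp : Tp.IsPositive) (hTn : Tn.IsPositive) (hdec : T = Tp - Tn)
    (horth : Tp ∘L Tn = 0) (j : ℕ) : singVal Tp j ≤ nuVal T j := by
  refine le_csInf (nSet_nonempty T j) ?_
  rintro c ⟨hc0, R, hrk, hR⟩
  -- square root of Tp
  have hTp0 : (0 : H →L[ℂ] H) ≤ Tp := (ContinuousLinearMap.nonneg_iff_isPositive Tp).2 hTp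
  set B : H →L[ℂ] H := CFC.sqrt Tp with hB
  have hB0 : (0 : H →L[ℂ] H) ≤ B := CFC.sqrt_nonneg Tp
  have hBpos : B.IsPositive := (ContinuousLinearMap.nonneg_iff_isPositive B).1 hB0
  have hBsa : IsSelfAdjoint B := hBpos.isSelfAdjoint
  have hTpsa : IsSelfAdjoint Tp := hTp.isSelfAdjoint
  have hTnsa : IsSelfAdjoint Tn := hTn.isSelfAdjoint
  have hBB : B ∘L B = Tp := by
    have h := CFC.sqrt_mul_sqrt_self Tp hTp0
    rw [hB, ← ContinuousLinearMap.mul_def]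
    exact h
  -- the support projection E of Tp
  set W : Submodule ℂ H := LinearMap.ker (Tp : H →ₗ[ℂ] H) with hW
  haveI : CompleteSpace W := (ContinuousLinearMap.isClosed_ker Tp).completeSpace_coe
  set U : Submodule ℂ H := Wᗮ with hU
  haveI : CompleteSpace U := W.isClosed_orthogonal.completeSpace_coe
  set E : H →L[ℂ] H := U.subtypeL ∘L U.orthogonalProjectionOnto with hE
  have hEsa : IsSelfAdjoint E := isSelfAdjoint_starProjection U
  have hEnorm : ∀ x : H, ‖E x‖ ≤ ‖x‖ := by
    intro x
    calc ‖E x‖ ≤ ‖(U.orthogonalProjectionOnto : H →L[ℂ] U)‖ * ‖x‖ := by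
          have h1 : E x = (U.orthogonalProjectionOnto x : H) := rfl
          rw [h1]
          exact (U.orthogonalProjectionOnto).le_opNorm x
      _ ≤ 1 * ‖x‖ := mul_le_mul_of_nonneg_right (Submodule.orthogonalProjectionOnto_norm_le U) (norm_nonneg x)
      _ = ‖x‖ := one_mul _
  have hWB : ∀ x ∈ W, B x = 0 := by
    intro x hx
    have hx' : Tp x = 0 := LinearMap.mem_ker.1 hx
    have h1 : ⟪B x, B x⟫ = ⟪x, Tp x⟫ := by
      calc ⟪B x, B x⟫ = ⟪x, B (B x)⟫ := sa_inner hBsa (B x) x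
        _ = ⟪x, Tp x⟫ := by
            congr 1
            rw [← hBB]; rfl
    rw [hx', inner_zero_right] at h1
    exact inner_self_eq_zero.1 h1
  have hmemW : ∀ y : H, y - E y ∈ W := by
    intro y
    have h2 : y - (U.orthogonalProjectionOnto y : H) ∈ Uᗮ :=
      Submodule.sub_starProjection_mem_orthogonal (K := U) y
    have h3 : Uᗮ = W := by rw [hU, Submodule.orthogonal_orthogonal]
    rw [← h3]
    exact h2
  have hTpE : Tp ∘L E = Tp := by
    ext y
    have h3 : Tp (y - E y) = 0 := LinearMap.mem_ker.1 (hmemW y)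
    rw [map_sub, sub_eq_zero] at h3
    simpa using h3.symm
  have hBE : B ∘L E = B := by
    ext y
    have h3 : B (y - E y) = 0 := hWB _ (hmemW y)
    rw [map_sub, sub_eq_zero] at h3
    simpa using h3.symm
  have hETp : E ∘L Tp = Tp := by
    have h := congrArg ContinuousLinearMap.adjoint hTpE
    rwa [ContinuousLinearMap.adjoint_comp, hTpsa.adjoint_eq, hEsa.adjoint_eq] at h
  have hTnE : Tn ∘L E = 0 := by
    have h1 : E ∘L Tn = 0 := by
      ext y
      have hTny : Tn y ∈ W := by
        rw [hW]
        exact LinearMap.mem_ker.2 (by simpa using congrFun (congrArg DFunLike.coe horth) y)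
      have h2 : U.orthogonalProjectionOnto (Tn y) = 0 :=
        Submodule.orthogonalProjectionOnto_apply_of_mem_orthogonal
          (W.le_orthogonal_orthogonal hTny)
      show U.subtypeL (U.orthogonalProjectionOnto (Tn y)) = 0
      rw [h2]; simp
    have h := congrArg ContinuousLinearMap.adjoint h1
    rwa [ContinuousLinearMap.adjoint_comp, hTnsa.adjoint_eq, hEsa.adjoint_eq, map_zero] at h
  -- the compressed finite-rank operator and its kernel
  set R₂ : H →L[ℂ] H := E ∘L (R ∘L E) with hR₂
  set K : Submodule ℂ H := LinearMap.ker (R₂ : H →ₗ[ℂ] H) with hKdef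
  haveI : CompleteSpace K := (ContinuousLinearMap.isClosed_ker R₂).completeSpace_coe
  set Q : H →L[ℂ] H := K.subtypeL ∘L K.orthogonalProjectionOnto with hQ
  have hQsa : IsSelfAdjoint Q := isSelfAdjoint_starProjection K
  have hQmem : ∀ x : H, Q x ∈ K := fun x => (K.orthogonalProjectionOnto x).2
  have hQnorm : ∀ x : H, ‖Q x‖ ≤ ‖x‖ := by
    intro x
    calc ‖Q x‖ ≤ ‖(K.orthogonalProjectionOnto : H →L[ℂ] K)‖ * ‖x‖ := by
          have h1 : Q x = (K.orthogonalProjectionOnto x : H) := rfl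
          rw [h1]
          exact (K.orthogonalProjectionOnto).le_opNorm x
      _ ≤ 1 * ‖x‖ := mul_le_mul_of_nonneg_right (Submodule.orthogonalProjectionOnto_norm_le K) (norm_nonneg x)
      _ = ‖x‖ := one_mul _
  have hQidem : ∀ x : H, Q (Q x) = Q x := by
    intro x
    have h1 : Q x = ((K.orthogonalProjectionOnto x : K) : H) := rfl
    rw [h1]
    show ((K.orthogonalProjectionOnto ((K.orthogonalProjectionOnto x : K) : H) : K) : H) = _
    rw [Submodule.orthogonalProjectionOnto_mem_subspace_eq_self]
  -- the quadratic form of Tp is small on K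
  have hkey : ∀ z ∈ K, RCLike.re ⟪Tp z, z⟫ ≤ c * ‖z‖ ^ 2 := by
    intro z hz
    have e0 : ⟪Tp z, z⟫ = ⟪Tp (E z), E z⟫ := by
      have h1 : Tp z = Tp (E z) := by
        conv_lhs => rw [← hTpE]
        rfl
      have h2 : Tp (E z) = E (Tp (E z)) := by
        conv_lhs => rw [show Tp (E z) = (E ∘L Tp) (E z) from by rw [hETp]]
        rfl
      rw [h1]
      calc ⟪Tp (E z), z⟫ = ⟪E (Tp (E z)), z⟫ := by rw [← h2]
        _ = ⟪Tp (E z), E z⟫ := sa_inner hEsa z (Tp (E z))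
    have e1 : Tp (E z) = T (E z) + Tn (E z) := by
      rw [hdec]; simp [ContinuousLinearMap.sub_apply]
    have e2 : Tn (E z) = 0 := by
      simpa using congrFun (congrArg DFunLike.coe hTnE) z
    have e4 : (⟪R (E z), E z⟫ : ℂ) = ⟪R₂ z, z⟫ := by
      calc (⟪R (E z), E z⟫ : ℂ) = ⟪E (R (E z)), z⟫ := (sa_inner hEsa z (R (E z))).symm
        _ = ⟪R₂ z, z⟫ := rfl
    have e5 : (⟪R₂ z, z⟫ : ℂ) = 0 := by
      rw [show R₂ z = 0 from LinearMap.mem_ker.1 hz, inner_zero_left]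
    have hcalc : RCLike.re ⟪Tp z, z⟫ = RCLike.re ⟪(T - R) (E z), E z⟫ := by
      rw [e0, e1, e2, add_zero]
      have e3 : (⟪T (E z), E z⟫ : ℂ) = ⟪(T - R) (E z), E z⟫ + ⟪R (E z), E z⟫ := by
        simp only [ContinuousLinearMap.sub_apply, inner_sub_left]
        ring
      rw [e3, e4, e5, add_zero]
    rw [hcalc]
    calc RCLike.re ⟪(T - R) (E z), E z⟫ ≤ c * ‖E z‖ ^ 2 := hR (E z)
      _ ≤ c * ‖z‖ ^ 2 := by
          have h6 := hEnorm z
          have h7 : ‖E z‖ * ‖E z‖ ≤ ‖z‖ * ‖z‖ :=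
            mul_le_mul h6 h6 (norm_nonneg _) (norm_nonneg _)
          exact mul_le_mul_of_nonneg_left (by nlinarith [h7]) hc0
  -- norm estimate for B Q
  have hBQ : ∀ x : H, ‖B (Q x)‖ ^ 2 ≤ c * ‖x‖ ^ 2 := by
    intro x
    have h2 : ⟪B (Q x), B (Q x)⟫ = ⟪Q x, Tp (Q x)⟫ := by
      calc ⟪B (Q x), B (Q x)⟫ = ⟪Q x, B (B (Q x))⟫ := sa_inner hBsa (B (Q x)) (Q x)
        _ = ⟪Q x, Tp (Q x)⟫ := by
            congr 1
            rw [← hBB]; rfl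
    have h3 : ‖B (Q x)‖ ^ 2 = RCLike.re ⟪B (Q x), B (Q x)⟫ := by
      rw [@inner_self_eq_norm_sq ℂ]
    rw [h3, h2, inner_re_symm]
    calc RCLike.re ⟪Tp (Q x), Q x⟫ ≤ c * ‖Q x‖ ^ 2 := hkey (Q x) (hQmem x)
      _ ≤ c * ‖x‖ ^ 2 := by
          have h6 := hQnorm x
          have h7 : ‖Q x‖ * ‖Q x‖ ≤ ‖x‖ * ‖x‖ :=
            mul_le_mul h6 h6 (norm_nonneg _) (norm_nonneg _)
          exact mul_le_mul_of_nonneg_left (by nlinarith [h7]) hc0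
  have hBQnorm : ‖B ∘L Q‖ ≤ Real.sqrt c := by
    refine ContinuousLinearMap.opNorm_le_bound _ (Real.sqrt_nonneg c) fun x => ?_
    have h5 : Real.sqrt (‖B (Q x)‖ ^ 2) ≤ Real.sqrt (c * ‖x‖ ^ 2) := Real.sqrt_le_sqrt (hBQ x)
    rwa [Real.sqrt_sq (norm_nonneg _), Real.sqrt_mul hc0, Real.sqrt_sq (norm_nonneg x)] at h5
  -- the rank-j approximant
  set P : H →L[ℂ] H := ContinuousLinearMap.id ℂ H - Q with hP
  set R₃ : H →L[ℂ] H := B ∘L (P ∘L B) with hR₃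
  have hsplit : Tp - R₃ = (B ∘L Q) ∘L (Q ∘L B) := by
    ext x
    have h1 : R₃ x = B (B x) - B (Q (B x)) := by
      show B ((ContinuousLinearMap.id ℂ H - Q) (B x)) = _
      rw [ContinuousLinearMap.sub_apply, map_sub]
      rfl
    have h2 : B (B x) = Tp x := by rw [← hBB]; rfl
    have h3 : ((B ∘L Q) ∘L (Q ∘L B)) x = B (Q (B x)) := by
      show B (Q (Q (B x))) = B (Q (B x))
      rw [hQidem]
    rw [ContinuousLinearMap.sub_apply, h1, h2, h3]
    abel
  have hnorm3 : ‖Tp - R₃‖ ≤ c := by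
    rw [hsplit]
    have h1 : Q ∘L B = ContinuousLinearMap.adjoint (B ∘L Q) := by
      rw [ContinuousLinearMap.adjoint_comp, hQsa.adjoint_eq, hBsa.adjoint_eq]
    have h2 : ‖Q ∘L B‖ = ‖B ∘L Q‖ := by
      rw [h1]
      exact LinearIsometryEquiv.norm_map ContinuousLinearMap.adjoint (B ∘L Q)
    calc ‖(B ∘L Q) ∘L (Q ∘L B)‖ ≤ ‖B ∘L Q‖ * ‖Q ∘L B‖ :=
          ContinuousLinearMap.opNorm_comp_le _ _
      _ ≤ Real.sqrt c * Real.sqrt c := by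
          rw [h2]
          exact mul_le_mul hBQnorm hBQnorm (norm_nonneg _) (Real.sqrt_nonneg c)
      _ = c := Real.mul_self_sqrt hc0
  -- rank estimate
  have hKrank : Module.rank ℂ   Kᗮ ≤ (j : Cardinal) := by
    set f : (Kᗮ : Submodule ℂ H) →ₗ[ℂ] LinearMap.range (R₂ : H →ₗ[ℂ] H) :=
      LinearMap.codRestrict (LinearMap.range (R₂ : H →ₗ[ℂ] H))
        ((R₂ : H →ₗ[ℂ] H).domRestrict Kᗮ)
        (fun x => LinearMap.mem_range_self _ _) with hf
    have hinj : Function.Injective f := by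
      rw [← LinearMap.ker_eq_bot, LinearMap.ker_eq_bot']
      intro m hm
      have h1 : R₂ (m : H) = 0 := by
        have := congrArg (Subtype.val) hm
        exact this
      have h2 : (m : H) ∈ K := LinearMap.mem_ker.2 h1
      have h3 : (⟪(m : H), (m : H)⟫ : ℂ) = 0 := by
        have hmm := m.2
        rw [Submodule.mem_orthogonal] at hmm
        exact hmm (m : H) h2
      ext
      simpa using inner_self_eq_zero.1 h3
    have hle1 : Module.rank ℂ Kᗮ ≤ Module.rank ℂ (LinearMap.range (R₂ : H →ₗ[ℂ] H)) :=
      LinearMap.rank_le_of_injective f hinj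
    have hle2 : LinearMap.rank (R₂ : H →ₗ[ℂ] H) ≤ LinearMap.rank (R : H →ₗ[ℂ] H) := by
      have e : (R₂ : H →ₗ[ℂ] H) = (E : H →ₗ[ℂ] H).comp
          (((R : H →ₗ[ℂ] H).comp (E : H →ₗ[ℂ] H))) := by
        rw [hR₂]; rfl
      rw [e]
      exact le_trans (LinearMap.rank_comp_le_right _ _) (LinearMap.rank_comp_le_left _ _)
    have hle3 : LinearMap.rank (R : H →ₗ[ℂ] H) ≤ (j : Cardinal) := hrk
    exact le_trans hle1 (le_trans hle2 hle3)
  have hrank3 : Module.rank ℂ (LinearMap.range (R₃ : H →ₗ[ℂ] H)) ≤ (j : Cardinal) := by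
    have e : (R₃ : H →ₗ[ℂ] H) = (B : H →ₗ[ℂ] H).comp
        (((P : H →ₗ[ℂ] H).comp (B : H →ₗ[ℂ] H))) := by
      rw [hR₃]; rfl
    have h1 : Module.rank ℂ (LinearMap.range (R₃ : H →ₗ[ℂ] H)) = LinearMap.rank (R₃ : H →ₗ[ℂ] H) := rfl
    rw [h1, e]
    refine le_trans (LinearMap.rank_comp_le_right _ _) ?_
    refine le_trans (LinearMap.rank_comp_le_left _ _) ?_
    have hPle : LinearMap.range (P : H →ₗ[ℂ] H) ≤ Kᗮ := by
      rintro _ ⟨y, rfl⟩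
      show P y ∈ Kᗮ
      have hy : P y = y - ((K.orthogonalProjectionOnto y : K) : H) := by
        rw [hP]; rfl
      rw [hy]
      exact Submodule.sub_starProjection_mem_orthogonal (K := K) y
    exact le_trans (Submodule.rank_mono hPle) hKrank
  have hfin : singVal Tp j ≤ ‖Tp - R₃‖ := singVal_le Tp j hrank3
  linarith


end BSop

/-- Quantitative Birman–Solomyak estimates: for selfadjoint `S, T ∈ 𝓛_g`, with
`λ_j^±(T) = μ_j(T^±)` given by the decompositions `T = T⁺ − T⁻`, `S = S⁺ − S⁻` into
positive/negative parts, the `r`-th powers of `limsup_j g(j)⁻¹ λ_j^±` and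
`liminf_j g(j)⁻¹ λ_j^±` of `S` and `T` differ by at most `‖Ṫ − Ṡ‖^r`,
where `r = (|ρ|+1)⁻¹` and `‖Ṫ − Ṡ‖ = limsup_j g(j)⁻¹ μ_j(T − S)`. -/
theorem birmanSolomyak_quantitative {H : Type*} [NormedAddCommGroup H]
    [InnerProductSpace ℂ H] [CompleteSpace H]
    (ρ : ℝ) (hρ : ρ < 0) (g : ℝ → ℝ)
    (hpos : ∀ t ∈ Set.Ici (0:ℝ), 0 < g t)
    (hcont : ContinuousOn g (Set.Ici (0:ℝ)))
    (hdec : ∃ b ≥ (0:ℝ), AntitoneOn g (Set.Ici b))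
    (hrv : ∀ l : ℝ, 0 < l → Tendsto (fun t => g (l * t) / g t) atTop (𝓝 (l ^ ρ)))
    (S T : H →L[ℂ] H)
    (hSsa : IsSelfAdjoint S) (hTsa : IsSelfAdjoint T)
    (hSc : IsCompactOperator S) (hTc : IsCompactOperator T)
    (hSg : (fun j : ℕ => singVal S j) =O[atTop] fun j : ℕ => g j)
    (hTg : (fun j : ℕ => singVal T j) =O[atTop] fun j : ℕ => g j)
    -- decompositions into positive and negative parts
    (Sp Sn Tp Tn : H →L[ℂ] H)
    (hSdec : S = Sp - Sn) (hSpPos : Sp.IsPositive) (hSnPos : Sn.IsPositive)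
    (hSortho : Sp.comp Sn = 0)
    (hTdec : T = Tp - Tn) (hTpPos : Tp.IsPositive) (hTnPos : Tn.IsPositive)
    (hTortho : Tp.comp Tn = 0) :
    (abs ((limsup (fun j : ℕ => (g j)⁻¹ * singVal Tp j) atTop) ^ ((|ρ| + 1)⁻¹)
        - (limsup (fun j : ℕ => (g j)⁻¹ * singVal Sp j) atTop) ^ ((|ρ| + 1)⁻¹))
      ≤ (limsup (fun j : ℕ => (g j)⁻¹ * singVal (T - S) j) atTop) ^ ((|ρ| + 1)⁻¹)) ∧
    (abs ((limsup (fun j : ℕ => (g j)⁻¹ * singVal Tn j) atTop) ^ ((|ρ| + 1)⁻¹)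
        - (limsup (fun j : ℕ => (g j)⁻¹ * singVal Sn j) atTop) ^ ((|ρ| + 1)⁻¹))
      ≤ (limsup (fun j : ℕ => (g j)⁻¹ * singVal (T - S) j) atTop) ^ ((|ρ| + 1)⁻¹)) ∧
    (abs ((liminf (fun j : ℕ => (g j)⁻¹ * singVal Tp j) atTop) ^ ((|ρ| + 1)⁻¹)
        - (liminf (fun j : ℕ => (g j)⁻¹ * singVal Sp j) atTop) ^ ((|ρ| + 1)⁻¹))
      ≤ (limsup (fun j : ℕ => (g j)⁻¹ * singVal (T - S) j) atTop) ^ ((|ρ| + 1)⁻¹)) ∧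
    (abs ((liminf (fun j : ℕ => (g j)⁻¹ * singVal Tn j) atTop) ^ ((|ρ| + 1)⁻¹)
        - (liminf (fun j : ℕ => (g j)⁻¹ * singVal Sn j) atTop) ^ ((|ρ| + 1)⁻¹))
      ≤ (limsup (fun j : ℕ => (g j)⁻¹ * singVal (T - S) j) atTop) ^ ((|ρ| + 1)⁻¹)) := by
  classical
  -- abbreviations
  have hgposN : ∀ j : ℕ, 0 < g j := fun j => hpos _ (Set.mem_Ici.2 (Nat.cast_nonneg j))
  set w : ℕ → ℝ := fun j => singVal (T - S) j with hw
  have hw0 : ∀ j, 0 ≤ w j := fun j => BSop.singVal_nonneg _ j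
  -- basic comparisons with singVal T, singVal S
  have hTple : ∀ j, singVal Tp j ≤ singVal T j := fun j =>
    (BSop.singVal_posPart_le_nuVal T Tp Tn hTpPos hTnPos hTdec hTortho j).trans
      (BSop.nuVal_le_singVal T j)
  have hTortho' : Tn ∘L Tp = 0 := by
    have h := congrArg ContinuousLinearMap.adjoint hTortho
    rwa [ContinuousLinearMap.adjoint_comp, hTpPos.isSelfAdjoint.adjoint_eq,
      hTnPos.isSelfAdjoint.adjoint_eq, map_zero] at h
  have hSortho' : Sn ∘L Sp = 0 := by
    have h := congrArg ContinuousLinearMap.adjoint hSortho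
    rwa [ContinuousLinearMap.adjoint_comp, hSpPos.isSelfAdjoint.adjoint_eq,
      hSnPos.isSelfAdjoint.adjoint_eq, map_zero] at h
  have hTdec' : -T = Tn - Tp := by rw [hTdec]; abel
  have hSdec' : -S = Sn - Sp := by rw [hSdec]; abel
  have hTnle : ∀ j, singVal Tn j ≤ singVal T j := by
    intro j
    have h1 := (BSop.singVal_posPart_le_nuVal (-T) Tn Tp hTnPos hTpPos hTdec' hTortho' j).trans
      (BSop.nuVal_le_singVal (-T) j)
    rwa [BSop.singVal_neg T j] at h1
  have hSple : ∀ j, singVal Sp j ≤ singVal S j := fun j =>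
    (BSop.singVal_posPart_le_nuVal S Sp Sn hSpPos hSnPos hSdec hSortho j).trans
      (BSop.nuVal_le_singVal S j)
  have hSnle : ∀ j, singVal Sn j ≤ singVal S j := by
    intro j
    have h1 := (BSop.singVal_posPart_le_nuVal (-S) Sn Sp hSnPos hSpPos hSdec' hSortho' j).trans
      (BSop.nuVal_le_singVal (-S) j)
    rwa [BSop.singVal_neg S j] at h1
  -- boundedness of the normalized sequences
  have hTb : IsBoundedUnder (· ≤ ·) atTop (fun j : ℕ => (g j)⁻¹ * singVal T j) :=
    BSaux.bdd_of_le_of_O hgposN (fun j => BSop.singVal_nonneg T j) (fun j => le_rfl) hTg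
  have hSb : IsBoundedUnder (· ≤ ·) atTop (fun j : ℕ => (g j)⁻¹ * singVal S j) :=
    BSaux.bdd_of_le_of_O hgposN (fun j => BSop.singVal_nonneg S j) (fun j => le_rfl) hSg
  have hTpb : IsBoundedUnder (· ≤ ·) atTop (fun j : ℕ => (g j)⁻¹ * singVal Tp j) :=
    BSaux.bdd_of_le_of_O hgposN (fun j => BSop.singVal_nonneg Tp j) hTple hTg
  have hTnb : IsBoundedUnder (· ≤ ·) atTop (fun j : ℕ => (g j)⁻¹ * singVal Tn j) :=
    BSaux.bdd_of_le_of_O hgposN (fun j => BSop.singVal_nonneg Tn j) hTnle hTg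
  have hSpb : IsBoundedUnder (· ≤ ·) atTop (fun j : ℕ => (g j)⁻¹ * singVal Sp j) :=
    BSaux.bdd_of_le_of_O hgposN (fun j => BSop.singVal_nonneg Sp j) hSple hSg
  have hSnb : IsBoundedUnder (· ≤ ·) atTop (fun j : ℕ => (g j)⁻¹ * singVal Sn j) :=
    BSaux.bdd_of_le_of_O hgposN (fun j => BSop.singVal_nonneg Sn j) hSnle hSg
  -- boundedness of the normalized difference sequence
  have hwWeyl : ∀ n k, w (n + k) ≤ singVal T n + singVal S k := by
    intro n k
    calc w (n + k) = singVal (T + -S) (n + k) := by rw [hw]; rw [sub_eq_add_neg]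
      _ ≤ singVal T n + singVal (-S) k := BSop.singVal_add_le T (-S) n k
      _ = singVal T n + singVal S k := by rw [BSop.singVal_neg]
  have hwb : IsBoundedUnder (· ≤ ·) atTop (fun j : ℕ => (g j)⁻¹ * w j) :=
    (BSaux.core hρ hpos hdec hrv w (fun j => singVal T j) (fun j => singVal S j) hw0
      (fun j => BSop.singVal_nonneg T j) (fun j => BSop.singVal_nonneg S j) hwWeyl hTb hSb).1
  -- Weyl inequalities for the positive/negative parts
  have weylTpSp : ∀ n k, singVal Tp (n + k) ≤ singVal Sp n + w k := by
    intro n k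
    have e : S + (T - S) = T := by abel
    calc singVal Tp (n + k) ≤ BSop.nuVal T (n + k) :=
          BSop.singVal_posPart_le_nuVal T Tp Tn hTpPos hTnPos hTdec hTortho _
      _ = BSop.nuVal (S + (T - S)) (n + k) := by rw [e]
      _ ≤ BSop.nuVal S n + BSop.nuVal (T - S) k := BSop.nuVal_add_le S (T - S) n k
      _ ≤ singVal Sp n + w k := by
          refine add_le_add ?_ (BSop.nuVal_le_singVal _ _)
          rw [hSdec]
          exact BSop.nuVal_sub_le_singVal Sp Sn hSnPos n
  have weylSpTp : ∀ n k, singVal Sp (n + k) ≤ singVal Tp n + w k := by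
    intro n k
    have e : T + (S - T) = S := by abel
    have e2 : S - T = -(T - S) := by abel
    calc singVal Sp (n + k) ≤ BSop.nuVal S (n + k) :=
          BSop.singVal_posPart_le_nuVal S Sp Sn hSpPos hSnPos hSdec hSortho _
      _ = BSop.nuVal (T + (S - T)) (n + k) := by rw [e]
      _ ≤ BSop.nuVal T n + BSop.nuVal (S - T) k := BSop.nuVal_add_le T (S - T) n k
      _ ≤ singVal Tp n + w k := by
          refine add_le_add ?_ ?_
          · rw [hTdec]
            exact BSop.nuVal_sub_le_singVal Tp Tn hTnPos n
          · refine (BSop.nuVal_le_singVal _ _).trans ?_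
            rw [hw]
            rw [e2, BSop.singVal_neg]
  have weylTnSn : ∀ n k, singVal Tn (n + k) ≤ singVal Sn n + w k := by
    intro n k
    have e : -S + (S - T) = -T := by abel
    have e2 : S - T = -(T - S) := by abel
    calc singVal Tn (n + k) ≤ BSop.nuVal (-T) (n + k) :=
          BSop.singVal_posPart_le_nuVal (-T) Tn Tp hTnPos hTpPos hTdec' hTortho' _
      _ = BSop.nuVal (-S + (S - T)) (n + k) := by rw [e]
      _ ≤ BSop.nuVal (-S) n + BSop.nuVal (S - T) k := BSop.nuVal_add_le (-S) (S - T) n k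
      _ ≤ singVal Sn n + w k := by
          refine add_le_add ?_ ?_
          · rw [hSdec']
            exact BSop.nuVal_sub_le_singVal Sn Sp hSpPos n
          · refine (BSop.nuVal_le_singVal _ _).trans ?_
            rw [hw]
            rw [e2, BSop.singVal_neg]
  have weylSnTn : ∀ n k, singVal Sn (n + k) ≤ singVal Tn n + w k := by
    intro n k
    have e : -T + (T - S) = -S := by abel
    calc singVal Sn (n + k) ≤ BSop.nuVal (-S) (n + k) :=
          BSop.singVal_posPart_le_nuVal (-S) Sn Sp hSnPos hSpPos hSdec' hSortho' _
      _ = BSop.nuVal (-T + (T - S)) (n + k) := by rw [e]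
      _ ≤ BSop.nuVal (-T) n + BSop.nuVal (T - S) k := BSop.nuVal_add_le (-T) (T - S) n k
      _ ≤ singVal Tn n + w k := by
          refine add_le_add ?_ (BSop.nuVal_le_singVal _ _)
          rw [hTdec']
          exact BSop.nuVal_sub_le_singVal Tn Tp hTpPos n
  -- the master two-sided estimate
  have master : ∀ u v : ℕ → ℝ, (∀ j, 0 ≤ u j) → (∀ j, 0 ≤ v j) →
      IsBoundedUnder (· ≤ ·) atTop (fun j : ℕ => (g j)⁻¹ * u j) →
      IsBoundedUnder (· ≤ ·) atTop (fun j : ℕ => (g j)⁻¹ * v j) →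
      (∀ n k, u (n + k) ≤ v n + w k) → (∀ n k, v (n + k) ≤ u n + w k) →
      (|(limsup (fun j : ℕ => (g j)⁻¹ * u j) atTop) ^ ((|ρ| + 1)⁻¹)
          - (limsup (fun j : ℕ => (g j)⁻¹ * v j) atTop) ^ ((|ρ| + 1)⁻¹)|
        ≤ (limsup (fun j : ℕ => (g j)⁻¹ * w j) atTop) ^ ((|ρ| + 1)⁻¹)) ∧
      (|(liminf (fun j : ℕ => (g j)⁻¹ * u j) atTop) ^ ((|ρ| + 1)⁻¹)
          - (liminf (fun j : ℕ => (g j)⁻¹ * v j) atTop) ^ ((|ρ| + 1)⁻¹)|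
        ≤ (limsup (fun j : ℕ => (g j)⁻¹ * w j) atTop) ^ ((|ρ| + 1)⁻¹)) := by
    intro u v hu0 hv0 hub hvb huv hvu
    obtain ⟨-, hls_uv, hli_uv⟩ :=
      BSaux.core hρ hpos hdec hrv u v w hu0 hv0 hw0 huv hvb hwb
    obtain ⟨-, hls_vu, hli_vu⟩ :=
      BSaux.core hρ hpos hdec hrv v u w hv0 hu0 hw0 hvu hub hwb
    have hgnn : ∀ j : ℕ, 0 ≤ (g j)⁻¹ := fun j => (inv_nonneg).2 (hgposN j).le
    have hU0 : ∀ j : ℕ, 0 ≤ (g j)⁻¹ * u j := fun j => mul_nonneg (hgnn j) (hu0 j)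
    have hV0 : ∀ j : ℕ, 0 ≤ (g j)⁻¹ * v j := fun j => mul_nonneg (hgnn j) (hv0 j)
    have hW0 : ∀ j : ℕ, 0 ≤ (g j)⁻¹ * w j := fun j => mul_nonneg (hgnn j) (hw0 j)
    have hAu : 0 ≤ limsup (fun j : ℕ => (g j)⁻¹ * u j) atTop := BSaux.limsup_nonneg hU0 hub
    have hAv : 0 ≤ limsup (fun j : ℕ => (g j)⁻¹ * v j) atTop := BSaux.limsup_nonneg hV0 hvb
    have hAw : 0 ≤ limsup (fun j : ℕ => (g j)⁻¹ * w j) atTop := BSaux.limsup_nonneg hW0 hwb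
    have hIu : 0 ≤ liminf (fun j : ℕ => (g j)⁻¹ * u j) atTop := BSaux.liminf_nonneg hU0 hub
    have hIv : 0 ≤ liminf (fun j : ℕ => (g j)⁻¹ * v j) atTop := BSaux.liminf_nonneg hV0 hvb
    have h1 := BSaux.opt hρ hAu hAv hAw hls_uv
    have h2 := BSaux.opt hρ hAv hAu hAw hls_vu
    have h3 := BSaux.opt hρ hIu hIv hAw hli_uv
    have h4 := BSaux.opt hρ hIv hIu hAw hli_vu
    constructor <;> rw [abs_sub_le_iff] <;> constructor <;> linarith
  obtain ⟨hp1, hp2⟩ := master (fun j => singVal Tp j) (fun j => singVal Sp j)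
    (fun j => BSop.singVal_nonneg Tp j) (fun j => BSop.singVal_nonneg Sp j)
    hTpb hSpb weylTpSp weylSpTp
  obtain ⟨hn1, hn2⟩ := master (fun j => singVal Tn j) (fun j => singVal Sn j)
    (fun j => BSop.singVal_nonneg Tn j) (fun j => BSop.singVal_nonneg Sn j)
    hTnb hSnb weylTnSn weylSnTn
  exact ⟨hp1, hn1, hp2, hn2⟩
end
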